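/- arXiv:2602.14204 — 7 statements merged into one kernel-verified Lean document; each statement's English description precedes it below -/
import Mathlib

section
/- Let m > n > 0 be positive integers with gcd(m,n) = 1. Then the polynomial x^m + x^n ∈ ℂ[x] is indecomposable: whenever x^m + x^n = g(h(x)) for polynomials g, h ∈ ℂ[x], either g or h has degree 1. -/
/-!
Normalise so that `h` is monic with `h 0 = 0`; then `g` is monic and `deg g * deg h = m`.
Write `f = X ^ m + X ^ n` and `e = deg h`.

If `h` has no nonzero root then `h = X ^ e`, so every exponent of `f = g (X ^ e)` is divisible
by `e`, and `e ∣ gcd m n = 1`.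

Otherwise let `z ≠ 0` be a root of `h`. Since `g 0 = 0`, `h ∣ f`, and since the nonzero roots
of `f` are simple, `X ^ 2 ∤ g`; comparing orders at `0` in `f = h * (g / X) ∘ h` shows that the
lowest monomial of `h` is `X ^ n`. For a primitive `(m - n)`-th root of unity `ω` we have
`f (ω X) = ω ^ m f (X)`, so `ω ^ (-m) g (ω ^ e X) ∘ ω ^ (-e) h (ω X)` is a second decomposition
of `f` into monic factors of the same degrees. A monic right factor of given degree without
constant term is unique, because `h₁ ^ d - h₂ ^ d = (h₁ - h₂) * ∑ h₁ ^ i h₂ ^ (d - 1 - i)` has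
degree at most `(d - 1) e` when `g₁ ∘ h₁ = g₂ ∘ h₂` with `g₁, g₂` monic of degree `d`. Hence
`h (ω X) = ω ^ e h (X)`, and the coefficient of `X ^ n` gives `m - n ∣ e - n`, so `e ≥ m` and
`deg g = 1`.
-/

open Polynomial Finset

namespace Polynomial

section CommSemiring

variable {R : Type*} [CommSemiring R]

theorem monic_X_pow_add_X_pow [Nontrivial R] {m n : ℕ} (hnm : n < m) :
    (X ^ m + X ^ n : R[X]).Monic :=
  monic_X_pow_add (by simpa)

theorem natDegree_X_pow_add_X_pow [Nontrivial R] {m n : ℕ} (hnm : n < m) :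
    (X ^ m + X ^ n : R[X]).natDegree = m := by
  rw [natDegree_add_eq_left_of_natDegree_lt] <;> simp [hnm]

theorem natTrailingDegree_X_pow_add_X_pow [Nontrivial R] {m n : ℕ} (hnm : n < m) :
    (X ^ m + X ^ n : R[X]).natTrailingDegree = n := by
  refine le_antisymm (natTrailingDegree_le_of_ne_zero ?_)
    (le_natTrailingDegree (monic_X_pow_add_X_pow hnm).ne_zero fun j hj ↦ ?_)
  · simp [coeff_X_pow, hnm.ne]
  · simp [coeff_X_pow, hj.ne, (hj.trans hnm).ne]

theorem X_pow_add_X_pow_comp_C_mul_X {m n : ℕ} {ω : R} (hω : ω ^ m = ω ^ n) :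
    (X ^ m + X ^ n : R[X]).comp (C ω * X) = C (ω ^ m) * (X ^ m + X ^ n) := by
  rw [add_comp, X_pow_comp, X_pow_comp, mul_pow, mul_pow, ← C_pow, ← C_pow, mul_add, hω]

theorem eq_one_of_X_pow_add_X_pow_eq_comp_X_pow [Nontrivial R] {m n e : ℕ} (hnm : n < m)
    (hgcd : m.gcd n = 1) (he : 0 < e) {g : R[X]} (hcomp : X ^ m + X ^ n = g.comp (X ^ e)) :
    e = 1 := by
  have hdvd : ∀ k, (X ^ m + X ^ n : R[X]).coeff k ≠ 0 → e ∣ k := by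
    intro k hk
    rw [hcomp, ← expand_eq_comp_X_pow, coeff_expand he] at hk
    by_contra hek
    exact hk (if_neg hek)
  exact Nat.dvd_one.mp <| hgcd ▸ Nat.dvd_gcd (hdvd m (by simp [coeff_X_pow, hnm.ne']))
    (hdvd n (by simp [coeff_X_pow, hnm.ne]))

end CommSemiring

section CommRing

variable {R : Type*} [CommRing R]

theorem natDegree_comp_sub_pow_le {g : R[X]} (hg : g.Monic) (h : R[X]) :
    (g.comp h - h ^ g.natDegree).natDegree ≤ (g.natDegree - 1) * h.natDegree := by
  rw [← X_pow_comp (p := h), ← sub_comp, ← monomial_one_right_eq_X_pow, ← hg.leadingCoeff,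
    self_sub_monomial_natDegree_leadingCoeff]
  exact natDegree_comp_le.trans (Nat.mul_le_mul_right _ (eraseLead_natDegree_le g))

theorem natDegree_geom_sum₂_term_of_monic {p q : R[X]} (hp : p.Monic) (hq : q.Monic)
    (hpq : p.natDegree = q.natDegree) {d i : ℕ} (hi : i ∈ range d) :
    (p ^ i * q ^ (d - 1 - i)).natDegree = (d - 1) * q.natDegree := by
  rw [(hp.pow i).natDegree_mul (hq.pow _), hp.natDegree_pow, hq.natDegree_pow, hpq, ← add_mul]
  have := mem_range.mp hi
  congr 1
  omega

theorem coeff_geom_sum₂_of_monic {p q : R[X]} (hp : p.Monic) (hq : q.Monic)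
    (hpq : p.natDegree = q.natDegree) (d : ℕ) :
    (∑ i ∈ range d, p ^ i * q ^ (d - 1 - i)).coeff ((d - 1) * q.natDegree) = d := by
  rw [finsetSum_coeff, sum_congr rfl fun i hi ↦
    natDegree_geom_sum₂_term_of_monic hp hq hpq hi ▸ ((hp.pow i).mul (hq.pow _)).coeff_natDegree]
  simp

theorem natDegree_geom_sum₂_of_monic [CharZero R] {p q : R[X]} (hp : p.Monic) (hq : q.Monic)
    (hpq : p.natDegree = q.natDegree) {d : ℕ} (hd : d ≠ 0) :
    (∑ i ∈ range d, p ^ i * q ^ (d - 1 - i)).natDegree = (d - 1) * q.natDegree :=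
  natDegree_eq_of_le_of_coeff_ne_zero
    (natDegree_sum_le_of_forall_le _ _ fun _ hi ↦
      (natDegree_geom_sum₂_term_of_monic hp hq hpq hi).le)
    (by rw [coeff_geom_sum₂_of_monic hp hq hpq]; exact_mod_cast hd)

theorem eq_of_comp_eq_comp_of_monic [IsDomain R] [CharZero R] {g₁ g₂ h₁ h₂ : R[X]}
    (hg₁ : g₁.Monic) (hg₂ : g₂.Monic) (hh₁ : h₁.Monic) (hh₂ : h₂.Monic)
    (hg : g₁.natDegree = g₂.natDegree) (hd : g₁.natDegree ≠ 0)
    (hh : h₁.natDegree = h₂.natDegree) (h₀ : h₁.coeff 0 = h₂.coeff 0)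
    (hcomp : g₁.comp h₁ = g₂.comp h₂) : h₁ = h₂ := by
  set d := g₁.natDegree
  set S := ∑ i ∈ range d, h₁ ^ i * h₂ ^ (d - 1 - i)
  have hSd : S.coeff ((d - 1) * h₂.natDegree) = d := coeff_geom_sum₂_of_monic hh₁ hh₂ hh d
  have hS : S ≠ 0 := fun hS ↦ hd <| by
    rw [hS, coeff_zero] at hSd
    exact_mod_cast hSd.symm
  have hpow : (h₁ ^ d - h₂ ^ d).natDegree ≤ (d - 1) * h₂.natDegree := by
    have h₁' := natDegree_comp_sub_pow_le hg₁ h₁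
    have h₂' := natDegree_comp_sub_pow_le hg₂ h₂
    rw [hh] at h₁'
    rw [← hg] at h₂'
    rw [show h₁ ^ d - h₂ ^ d = (g₂.comp h₂ - h₂ ^ d) - (g₁.comp h₁ - h₁ ^ d) by
      rw [hcomp, hg]; ring]
    exact (natDegree_sub_le _ _).trans (max_le h₂' h₁')
  by_contra hne
  have hdiff : (h₁ - h₂).natDegree = 0 := by
    have := natDegree_mul hS (sub_ne_zero.mpr hne)
    rw [geom_sum₂_mul, natDegree_geom_sum₂_of_monic hh₁ hh₂ hh hd] at this
    omega
  apply hne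
  rw [← sub_eq_zero, eq_C_of_natDegree_eq_zero hdiff, coeff_sub, h₀, sub_self, C_0]

theorem pow_eq_of_comp_C_mul_X_eq [IsDomain R] {h : R[X]} {ω c : R}
    (hrot : h.comp (C ω * X) = C c * h) {j : ℕ} (hj : h.coeff j ≠ 0) : ω ^ j = c := by
  have := congrArg (coeff · j) hrot
  simp only [comp_C_mul_X_coeff, coeff_C_mul] at this
  exact mul_left_cancel₀ hj (this.trans (mul_comm _ _))

theorem eq_zero_of_sq_dvd_X_pow_add_X_pow [IsDomain R] [CharZero R] {m n : ℕ} (hnm : n < m)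
    {z : R} (hdvd : (X - C z) ^ 2 ∣ X ^ m + X ^ n) : z = 0 := by
  have hf : (X ^ m + X ^ n : R[X]) ≠ 0 := (monic_X_pow_add_X_pow hnm).ne_zero
  obtain ⟨hz, hz'⟩ := (one_lt_rootMultiplicity_iff_isRoot hf).mp
    ((le_rootMultiplicity_iff hf).mpr hdvd)
  simp only [IsRoot, eval_add, eval_pow, eval_X, derivative_add, derivative_X_pow, eval_mul,
    eval_C] at hz hz'
  have hmul : ∀ k : ℕ, z * ((k : R) * z ^ (k - 1)) = k * z ^ k := by
    rintro (_ | k) <;> simp [pow_succ]; ring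
  have : ((n : R) - m) * z ^ n = 0 := by linear_combination z * hz' - m * hz - hmul m - hmul n
  have hmn : (n : R) - m ≠ 0 := sub_ne_zero.mpr (by exact_mod_cast hnm.ne)
  exact (pow_eq_zero_iff'.mp ((mul_eq_zero.mp this).resolve_left hmn)).1

end CommRing

section Field

variable {K : Type*} [Field K]

theorem exists_comp_eq_comp_monic_coeff_zero (g h : K[X]) (hh : h.natDegree ≠ 0) :
    ∃ g' h' : K[X], g'.comp h' = g.comp h ∧ h'.Monic ∧ h'.coeff 0 = 0 ∧
      g'.natDegree = g.natDegree ∧ h'.natDegree = h.natDegree := by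
  have hc : h.leadingCoeff ≠ 0 := leadingCoeff_ne_zero.mpr (by rintro rfl; simp at hh)
  refine ⟨g.comp (C h.leadingCoeff * X + C (h.coeff 0)),
    C h.leadingCoeff⁻¹ * (h - C (h.coeff 0)), ?_, ?_, ?_, ?_, ?_⟩
  · rw [comp_assoc, add_comp, mul_comp, C_comp, X_comp, C_comp, ← mul_assoc, ← C_mul,
      mul_inv_cancel₀ hc, C_1, one_mul, sub_add_cancel]
  · refine monic_C_mul_of_mul_leadingCoeff_eq_one ?_
    rw [leadingCoeff_sub_of_degree_lt, inv_mul_cancel₀ hc]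
    exact degree_C_le.trans_lt (natDegree_pos_iff_degree_pos.mp (Nat.pos_of_ne_zero hh))
  · simp
  · rw [natDegree_comp, natDegree_linear hc, mul_one]
  · rw [natDegree_C_mul (inv_ne_zero hc), natDegree_sub_C]

theorem comp_C_mul_X_eq_of_comp_comp_C_mul_X_eq [CharZero K] {g h : K[X]} (hg : g.Monic)
    (hd : g.natDegree ≠ 0) (hh : h.Monic) (h₀ : h.coeff 0 = 0) {ω : K} (hω : ω ≠ 0)
    (hrot : (g.comp h).comp (C ω * X) = C (ω ^ (g.natDegree * h.natDegree)) * g.comp h) :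
    h.comp (C ω * X) = C (ω ^ h.natDegree) * h := by
  have hωe : ω ^ h.natDegree ≠ 0 := pow_ne_zero _ hω
  have hωde : ω ^ (g.natDegree * h.natDegree) ≠ 0 := pow_ne_zero _ hω
  set h' := C (ω ^ h.natDegree)⁻¹ * h.comp (C ω * X)
  set g' := C (ω ^ (g.natDegree * h.natDegree))⁻¹ * g.comp (C (ω ^ h.natDegree) * X)
  have hlin : ∀ a : K, a ≠ 0 → (C a * X).natDegree ≠ 0 := fun a ha ↦ by
    rw [natDegree_C_mul_X a ha]; exact one_ne_zero
  have hh' : h'.natDegree = h.natDegree := by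
    rw [natDegree_C_mul (inv_ne_zero hωe), natDegree_comp, natDegree_C_mul_X ω hω, mul_one]
  have hg' : g'.natDegree = g.natDegree := by
    rw [natDegree_C_mul (inv_ne_zero hωde), natDegree_comp, natDegree_C_mul_X _ hωe, mul_one]
  have hh'_monic : h'.Monic := by
    rw [Monic, leadingCoeff_mul, leadingCoeff_C, leadingCoeff_comp (hlin ω hω), hh.leadingCoeff,
      one_mul, leadingCoeff_C_mul_X, inv_mul_cancel₀ hωe]
  have hg'_monic : g'.Monic := by
    rw [Monic, leadingCoeff_mul, leadingCoeff_C, leadingCoeff_comp (hlin _ hωe), hg.leadingCoeff,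
      one_mul, leadingCoeff_C_mul_X, ← pow_mul, mul_comm h.natDegree, inv_mul_cancel₀ hωde]
  have hcomp : g'.comp h' = g.comp h := by
    rw [mul_comp, C_comp, comp_assoc, mul_comp, C_comp, X_comp, ← mul_assoc, ← C_mul,
      mul_inv_cancel₀ hωe, C_1, one_mul, ← comp_assoc, hrot, ← mul_assoc, ← C_mul,
      inv_mul_cancel₀ hωde, C_1, one_mul]
  have h'_eq : h' = h := eq_of_comp_eq_comp_of_monic hg'_monic hg hh'_monic hh hg' (hg' ▸ hd)
    hh' (by simp [h', h₀]) hcomp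
  calc h.comp (C ω * X) = C (ω ^ h.natDegree) * h' := by
        rw [← mul_assoc, ← C_mul, mul_inv_cancel₀ hωe, C_1, one_mul]
    _ = C (ω ^ h.natDegree) * h := by rw [h'_eq]

theorem Monic.exists_isRoot_ne_zero [IsAlgClosed K] {h : K[X]} (hh : h.Monic)
    (hlt : h.natTrailingDegree < h.natDegree) : ∃ z ≠ 0, h.IsRoot z := by
  by_contra! hroot
  have hroots : h.roots = Multiset.replicate h.natDegree 0 :=
    Multiset.eq_replicate.mpr ⟨IsAlgClosed.card_roots_eq_natDegree,
      fun z hz ↦ by by_contra hz0; exact hroot z hz0 (isRoot_of_mem_roots hz)⟩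
  have : h = X ^ h.natDegree := by
    conv_lhs => rw [(IsAlgClosed.splits h).eq_prod_roots_of_monic hh, hroots]
    simp
  exact hlt.ne (hh.eq_X_pow_iff_natTrailingDegree_eq_natDegree.mp this)

theorem natTrailingDegree_eq_of_X_pow_add_X_pow_eq_comp [CharZero K] {m n : ℕ} (hn : 0 < n)
    (hnm : n < m) {g h : K[X]} (h₀ : h.coeff 0 = 0) {z : K} (hz : z ≠ 0) (hroot : h.IsRoot z)
    (hcomp : X ^ m + X ^ n = g.comp h) : h.natTrailingDegree = n := by
  have hg₀ : g.coeff 0 = 0 := by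
    have := congrArg (eval 0) hcomp
    simp [eval_comp, ← coeff_zero_eq_eval_zero, h₀, hn.ne', (hn.trans hnm).ne'] at this
    exact this.symm
  set u := g.divX
  have hg : g = X * u := by simpa [hg₀] using (X_mul_divX_add g).symm
  have hu₀ : u.coeff 0 ≠ 0 := by
    intro hu₀
    have hu : u = X * u.divX := by simpa [hu₀] using (X_mul_divX_add u).symm
    have : (X - C z) ^ 2 ∣ X ^ m + X ^ n := by
      rw [hcomp, hg, hu, ← mul_assoc, ← sq, mul_comp, X_pow_comp]
      exact (pow_dvd_pow_of_dvd (dvd_iff_isRoot.mpr hroot) 2).mul_right _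
    exact hz (eq_zero_of_sq_dvd_X_pow_add_X_pow hnm this)
  have huh₀ : (u.comp h).coeff 0 ≠ 0 := by
    rwa [coeff_zero_eq_eval_zero, eval_comp, ← coeff_zero_eq_eval_zero h, h₀,
      ← coeff_zero_eq_eval_zero]
  have hf : X ^ m + X ^ n = h * u.comp h := by rw [hcomp, hg, mul_comp, X_comp]
  have hf₀ : h * u.comp h ≠ 0 := hf ▸ (monic_X_pow_add_X_pow hnm).ne_zero
  have := natTrailingDegree_mul (left_ne_zero_of_mul hf₀) (right_ne_zero_of_mul hf₀)
  rw [← hf, natTrailingDegree_X_pow_add_X_pow hnm,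
    natTrailingDegree_eq_zero.mpr (Or.inr huh₀)] at this
  omega

theorem natDegree_eq_one_of_X_pow_add_X_pow_eq_comp [IsAlgClosed K] [CharZero K] {m n : ℕ}
    (hn : 0 < n) (hnm : n < m) (hgcd : m.gcd n = 1) {g h : K[X]} (hh : h.Monic)
    (h₀ : h.coeff 0 = 0) (hcomp : X ^ m + X ^ n = g.comp h) :
    g.natDegree = 1 ∨ h.natDegree = 1 := by
  have hde : g.natDegree * h.natDegree = m := by
    rw [← natDegree_comp, ← hcomp, natDegree_X_pow_add_X_pow hnm]
  have hd : g.natDegree ≠ 0 := by rintro hd; rw [hd, zero_mul] at hde; omega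
  have he : h.natDegree ≠ 0 := by rintro he; rw [he, mul_zero] at hde; omega
  rcases (natTrailingDegree_le_natDegree h).lt_or_eq with hlt | heq
  · left
    obtain ⟨z, hz, hroot⟩ := hh.exists_isRoot_ne_zero hlt
    have htr := natTrailingDegree_eq_of_X_pow_add_X_pow_eq_comp hn hnm h₀ hz hroot hcomp
    have : NeZero (m - n) := ⟨by omega⟩
    obtain ⟨ω, hω⟩ := IsAlgClosed.exists_root _ (degree_cyclotomic_pos (m - n) K (by omega)).ne'
    rw [isRoot_cyclotomic_iff] at hω
    have hω₀ : ω ≠ 0 := hω.ne_zero (by omega)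
    have hωmn : ω ^ m = ω ^ n := by
      rw [← Nat.sub_add_cancel hnm.le, pow_add, hω.pow_eq_one, one_mul]
    have hg : g.Monic := by
      have := leadingCoeff_comp (p := g) he
      rwa [← hcomp, (monic_X_pow_add_X_pow hnm).leadingCoeff, hh.leadingCoeff, one_pow, mul_one,
        eq_comm] at this
    have hrot := comp_C_mul_X_eq_of_comp_comp_C_mul_X_eq hg hd hh h₀ hω₀
      (by rw [hde, ← hcomp, X_pow_add_X_pow_comp_C_mul_X hωmn])
    have hωe : ω ^ n = ω ^ h.natDegree :=
      pow_eq_of_comp_C_mul_X_eq hrot (htr ▸ trailingCoeff_nonzero_iff_nonzero.mpr hh.ne_zero)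
    have hdvd : m - n ∣ h.natDegree - n := hω.dvd_of_pow_eq_one _ <| by
      rw [pow_sub₀ _ hω₀ (htr ▸ hlt.le), ← hωe, mul_inv_cancel₀ (pow_ne_zero _ hω₀)]
    have hme : m ≤ h.natDegree := by have := Nat.le_of_dvd (by omega) hdvd; omega
    nlinarith
  · right
    have hX := hh.eq_X_pow_iff_natTrailingDegree_eq_natDegree.mpr heq
    exact eq_one_of_X_pow_add_X_pow_eq_comp_X_pow hnm hgcd (Nat.pos_of_ne_zero he) (hX ▸ hcomp)

end Field

end Polynomial

/-- **Indecomposability of `X^m + X^n`.**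
If `m > n > 0` and `gcd m n = 1`, then whenever `X^m + X^n = g ∘ h` for complex
polynomials `g, h`, one of `g`, `h` has degree 1. -/
theorem xm_add_xn_indecomposable (m n : ℕ) (hn : 0 < n) (hnm : n < m)
    (hgcd : Nat.gcd m n = 1) (g h : Polynomial ℂ)
    (hcomp : (X ^ m + X ^ n : Polynomial ℂ) = g.comp h) :
    g.degree = 1 ∨ h.degree = 1 := by
  have hde : g.natDegree * h.natDegree = m := by
    rw [← natDegree_comp, ← hcomp, natDegree_X_pow_add_X_pow hnm]
  obtain ⟨g', h', hcomp', hh', h₀', hg', hh''⟩ :=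
    exists_comp_eq_comp_monic_coeff_zero g h (by rintro he; rw [he, mul_zero] at hde; omega)
  have hdeg (p : ℂ[X]) : p.degree = 1 ↔ p.natDegree = 1 :=
    degree_eq_iff_natDegree_eq_of_pos (n := 1) one_pos
  rw [hdeg, hdeg, ← hg', ← hh'']
  exact natDegree_eq_one_of_X_pow_add_X_pow_eq_comp hn hnm hgcd hh' h₀' (hcomp.trans hcomp'.symm)
end

section
/- Let γ ∈ ℤ^l be a vector of nonzero integers summing to zero with gcd of entries equal to 1, and let A be an integer matrix as above (first row all ones, first l−1 rows spanning ker(γ : ℤ^l → ℤ), last row k with γ·k = 1) with column blocks (1, m_j, k_j) for j = 1,…,l where m_j ∈ ℤ^{l-2}. Then for every h ∈ {1,…,l}, the l−1 vectors (m_j − m_h, k_j − k_h) ∈ ℤ^{l-1} for j ≠ h span ℤ^{l-1}. -/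
open Finset

/-! The rows of `A` span `ℤ^l`: the first `l − 1` span `ker γ`, and the last row `k` complements
it because `γ · k = 1`. So `A` is invertible and every `(0, v)` is `A c` for an integer vector `c`.
The first row of `A` gives `∑ c_j = 0`, hence `v = ∑_j c_j ((m_j, k_j) − (m_h, k_h))`. -/

theorem LinearMap.ker_sup_span_singleton_eq_top {R M : Type*} [Ring R] [AddCommGroup M]
    [Module R M] {f : M →ₗ[R] R} {k : M} (hk : f k = 1) : ker f ⊔ R ∙ k = ⊤ := by
  refine eq_top_iff.2 fun v _ => ?_
  have hv : v - f v • k ∈ ker f := by simp [hk]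
  simpa using Submodule.add_mem_sup hv (Submodule.mem_span_singleton.2 ⟨f v, rfl⟩ : f v • k ∈ R ∙ k)

theorem Matrix.isUnit_of_span_range_eq_top {m R : Type*} [Fintype m] [DecidableEq m] [CommRing R]
    {A : Matrix m m R} (hA : Submodule.span R (Set.range A) = ⊤) : IsUnit A := by
  refine Matrix.vecMul_surjective_iff_isUnit.1 fun u => ?_
  obtain ⟨y, hy⟩ : u ∈ LinearMap.range A.vecMulLinear := by
    rw [range_vecMulLinear]
    exact hA ▸ Submodule.mem_top
  exact ⟨y, hy⟩

theorem sum_smul_mem_span_sub_of_sum_eq_zero {ι R M : Type*} [Fintype ι] [Ring R]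
    [AddCommGroup M] [Module R M] (w : ι → M) (c : ι → R) (hc : ∑ j, c j = 0) (h : ι) :
    ∑ j, c j • w j ∈ Submodule.span R {v | ∃ j, j ≠ h ∧ v = w j - w h} := by
  have hsum : ∑ j, c j • w j = ∑ j, c j • (w j - w h) := by
    simp [smul_sub, Finset.sum_sub_distrib, ← Finset.sum_smul, hc]
  rw [hsum]
  refine Submodule.sum_mem _ fun j _ => ?_
  obtain rfl | hj := eq_or_ne j h
  · simp
  · exact Submodule.smul_mem _ _ (Submodule.subset_span ⟨j, hj, rfl⟩)

theorem Matrix.span_tail_col_sub_col_eq_top {ι R : Type*} [Fintype ι] [CommRing R] {n : ℕ}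
    {A : Matrix (Fin (n + 1)) ι R} (hA : Function.Surjective A.mulVec) (h0 : ∀ j, A 0 j = 1)
    (h : ι) :
    Submodule.span R {v : Fin n → R | ∃ j, j ≠ h ∧ v = fun i => A i.succ j - A i.succ h} = ⊤ := by
  refine eq_top_iff.2 fun v _ => ?_
  obtain ⟨c, hc⟩ := hA (Fin.cons 0 v)
  have hc0 : ∑ j, c j = 0 := by simpa [Matrix.mulVec, dotProduct, h0] using congrFun hc 0
  have hv : v = ∑ j, c j • fun i => A i.succ j := by
    funext i
    simpa [Matrix.mulVec, dotProduct, Finset.sum_apply, mul_comm] using (congrFun hc i.succ).symm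
  rw [hv]
  exact sum_smul_mem_span_sub_of_sum_eq_zero _ c hc0 h

/-- **Change of variables lemma.**
Let `γ ∈ ℤ^l` (`l = d + 2`) be a prime gamma vector and `A` an `l × l` integer
matrix whose first row is all ones, whose first `l − 1` rows span
`ker (γ : ℤ^l → ℤ)`, and whose last row `k` satisfies `γ · k = 1`; write the
columns of `A` as `(1, m_j, k_j)` with `m_j ∈ ℤ^d`.  Then for every
`h ∈ {1, …, l}` the `l − 1` vectors `(m_j − m_h, k_j − k_h) ∈ ℤ^{l-1}`, `j ≠ h`,
span `ℤ^{l-1}`. -/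
theorem toric_model_differences_span (d : ℕ) (γ : Fin (d + 2) → ℤ)
    (A : Matrix (Fin (d + 2)) (Fin (d + 2)) ℤ)
    (hrow0 : ∀ j, A 0 j = 1)
    (hker : Submodule.span ℤ {v : Fin (d + 2) → ℤ | ∃ i : Fin (d + 2), (i : ℕ) < d + 1 ∧ v = A i}
      = LinearMap.ker (Fintype.linearCombination ℤ γ))
    (hlast : ∑ j, γ j * A ⟨d + 1, by omega⟩ j = 1)
    (h : Fin (d + 2)) :
    Submodule.span ℤ
      {v : Fin (d + 1) → ℤ | ∃ j : Fin (d + 2), j ≠ h ∧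
        v = fun i : Fin (d + 1) =>
          if hi : (i : ℕ) < d then
            A ⟨(i : ℕ) + 1, by omega⟩ j - A ⟨(i : ℕ) + 1, by omega⟩ h
          else
            A ⟨d + 1, by omega⟩ j - A ⟨d + 1, by omega⟩ h} = ⊤ := by
  have hk : Fintype.linearCombination ℤ γ (A ⟨d + 1, by omega⟩) = 1 := by
    simpa [Fintype.linearCombination_apply, mul_comm] using hlast
  have hrows : Submodule.span ℤ (Set.range A) = ⊤ := by
    refine eq_top_iff.2 ((LinearMap.ker_sup_span_singleton_eq_top hk).symm.le.trans (sup_le ?_ ?_))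
    · exact hker ▸ Submodule.span_mono fun v ⟨i, _, hv⟩ => ⟨i, hv.symm⟩
    · exact Submodule.span_mono (Set.singleton_subset_iff.2 ⟨_, rfl⟩)
  have hcols : ∀ j, (fun i : Fin (d + 1) =>
      if hi : (i : ℕ) < d then A ⟨(i : ℕ) + 1, by omega⟩ j - A ⟨(i : ℕ) + 1, by omega⟩ h
      else A ⟨d + 1, by omega⟩ j - A ⟨d + 1, by omega⟩ h) = fun i => A i.succ j - A i.succ h := by
    intro j
    funext i
    split_ifs with hi <;> congr 2 <;> ext <;> simp <;> omega
  simp_rw [hcols]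
  exact Matrix.span_tail_col_sub_col_eq_top
    (Matrix.mulVec_surjective_iff_isUnit.2 (Matrix.isUnit_of_span_range_eq_top hrows)) hrow0 h
end

section
/- Let γ ∈ ℤ^l be a prime gamma vector whose associated vectors m_1, …, m_l ∈ ℤ^d (d = l−2) satisfy ∑ γ_j m_j = 0 and: for each fixed k, the vectors m_j − m_k span ℤ^d. Let Δ ⊂ ℝ^d be the convex hull of the m_j. If F is a facet of Δ, then F contains at most d of the points m_j; in particular every proper face of Δ is a simplex. -/
open Finset

/- A face `{⟨x, u⟩ = b}` containing all but one of the `m_j` would, evaluated on the affine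
relation `∑ γ_j m_j = 0`, `∑ γ_j = 0`, leave the single term `γ_k (⟨m_k, u⟩ - b)`, which is
nonzero for the point `m_k` off the face. -/

theorem sum_mul_dotProduct_sub_eq_zero {ι n R : Type*} [Fintype ι] [Fintype n] [CommRing R]
    (γ : ι → R) (m : ι → n → R) (u : n → R) (b : R)
    (hsum : ∑ j, γ j = 0) (hrel : ∑ j, γ j • m j = 0) :
    ∑ j, γ j * (m j ⬝ᵥ u - b) = 0 := by
  calc ∑ j, γ j * (m j ⬝ᵥ u - b)
      = (∑ j, γ j • m j) ⬝ᵥ u - (∑ j, γ j) * b := by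
        simp only [mul_sub, sum_sub_distrib, sum_mul, sum_dotProduct, smul_dotProduct,
          smul_eq_mul]
    _ = 0 := by rw [hsum, hrel, zero_dotProduct, zero_mul, sub_zero]

theorem card_filter_eq_zero_add_two_le_of_sum_mul_eq_zero {ι R : Type*} [Fintype ι]
    [CommRing R] [NoZeroDivisors R] [DecidableEq R] {γ f : ι → R} (hγ : ∀ j, γ j ≠ 0)
    (h : ∑ j, γ j * f j = 0) {k : ι} (hk : f k ≠ 0) :
    (univ.filter fun j => f j = 0).card + 2 ≤ Fintype.card ι := by
  have hsplit := card_filter_add_card_filter_not (s := univ) (fun j => f j = 0)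
  by_contra! hlt
  have hle : (univ.filter fun j => ¬f j = 0).card ≤ 1 := by rw [card_univ] at hsplit; omega
  have hsupport : ∀ j, j ≠ k → f j = 0 := fun j hjk => by
    by_contra hj
    exact hjk (card_le_one.mp hle j (by simpa using hj) k (by simpa using hk))
  rw [sum_eq_single k (fun j _ hjk => by rw [hsupport j hjk, mul_zero]) (by simp)] at h
  exact mul_ne_zero (hγ k) hk h

theorem facet_contains_at_most_d_points_general (d : ℕ) (γ : Fin (d + 2) → ℤ)
    (hγ0 : ∀ j, γ j ≠ 0) (hsum : ∑ j, γ j = 0)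
    (m : Fin (d + 2) → Fin d → ℤ)
    (hrelm : ∀ i, ∑ j, γ j * m j i = 0)
    (u : Fin d → ℤ) (b : ℤ)
    (hproper : ∃ j, ∑ i, m j i * u i < b) :
    (Finset.univ.filter (fun j => ∑ i, m j i * u i = b)).card ≤ d := by
  obtain ⟨k, hk⟩ := hproper
  have hrel : ∑ j, γ j • m j = 0 := funext fun i => by simpa using hrelm i
  have hbound := card_filter_eq_zero_add_two_le_of_sum_mul_eq_zero hγ0
    (sum_mul_dotProduct_sub_eq_zero γ m u b hsum hrel) (sub_ne_zero.mpr hk.ne)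
  simp only [sub_eq_zero, Fintype.card_fin] at hbound
  exact Nat.le_of_add_le_add_right hbound

/-- **Facets of `Δ` contain at most `d` of the points `m_j`; `Δ` is simplicial.**
Let `γ ∈ ℤ^l` (`l = d + 2`) be a prime gamma vector with associated points
`m_1, …, m_l ∈ ℤ^d` satisfying `∑ γ_j m_j = 0` and such that for each `k` the
differences `m_j − m_k` span `ℤ^d`.  If `u` is a (integral) linear functional
and `b` a bound with `⟨m_j, u⟩ ≤ b` for all `j` and `⟨m_j, u⟩ < b` for some `j`
(so that `{x ∈ Δ : ⟨x, u⟩ = b}` is a proper face, in particular any facet arises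
this way), then at most `d` of the points `m_j` lie on the face. -/
theorem facet_contains_at_most_d_points (d : ℕ) (γ : Fin (d + 2) → ℤ)
    (hγ0 : ∀ j, γ j ≠ 0) (hsum : ∑ j, γ j = 0)
    (hgcd : Finset.univ.gcd γ = 1)
    (m : Fin (d + 2) → Fin d → ℤ)
    (hrelm : ∀ i, ∑ j, γ j * m j i = 0)
    (hspan : ∀ k : Fin (d + 2),
      Submodule.span ℤ {v : Fin d → ℤ | ∃ j, v = m j - m k} = ⊤)
    (u : Fin d → ℤ) (b : ℤ)
    (hsupp : ∀ j, ∑ i, m j i * u i ≤ b)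
    (hproper : ∃ j, ∑ i, m j i * u i < b) :
    (Finset.univ.filter (fun j => ∑ i, m j i * u i = b)).card ≤ d :=
  facet_contains_at_most_d_points_general d γ hγ0 hsum m hrelm u b hproper
end

section
/- With notation as above (γ a prime gamma vector, m_j ∈ ℤ^d its associated exponent vectors, Δ their convex hull), Δ is a simplex if and only if either γ or −γ has exactly one negative entry; and if γ_k is the unique negative (resp. unique positive) entry of γ, then m_k lies in the interior of Δ. -/
/-!
The `d + 2` points affinely span `ℝ^d`, so their affine relations form a line, spanned by `γ`.
If `d + 1` of the points span a simplex equal to `Δ`, the remaining point `m_k` is a convex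
combination of them; the resulting relation is a multiple of `γ`, so every `γ_j` with `j ≠ k`
has the sign opposite to `γ_k`. Conversely, if `γ_k` is the only entry of its sign, dividing the
relation by `-γ_k` writes `m_k` as a combination of the other points with strictly positive
weights. Those `d + 1` points then still span, hence form an affine basis whose hull is `Δ`, and
`m_k` has positive barycentric coordinates in it, so it lies in the interior.
-/

open Finset Set Module

variable {ι : Type*}

theorem filter_neg_eq_singleton_or_filter_pos_eq_singleton_iff {R : Type*} [Ring R] [LinearOrder R]
    [IsStrictOrderedRing R] [Fintype ι] [DecidableEq ι] {γ : ι → R} (hγ0 : ∀ i, γ i ≠ 0)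
    {j : ι} :
    ((univ.filter fun i => γ i < 0) = {j} ∨ (univ.filter fun i => 0 < γ i) = {j}) ↔
      ∀ i ≠ j, γ i * γ j < 0 := by
  simp only [Finset.ext_iff, mem_filter, Finset.mem_univ, true_and, Finset.mem_singleton]
  constructor
  · rintro (h | h) i hi
    · exact mul_neg_of_pos_of_neg ((hγ0 i).lt_or_gt.resolve_left (mt (h i).1 hi)) ((h j).2 rfl)
    · exact mul_neg_of_neg_of_pos ((hγ0 i).lt_or_gt.resolve_right (mt (h i).1 hi)) ((h j).2 rfl)
  · intro h
    rcases (hγ0 j).lt_or_gt with hj | hj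
    · refine Or.inl fun i => ⟨fun hi => ?_, fun hi => hi ▸ hj⟩
      by_contra hij
      exact (mul_pos_of_neg_of_neg hi hj).not_gt (h i hij)
    · refine Or.inr fun i => ⟨fun hi => ?_, fun hi => hi ▸ hj⟩
      by_contra hij
      exact (mul_pos hi hj).not_gt (h i hij)

theorem span_intCast_image_eq_top [Finite ι] (R : Type*) [Ring R] {S : Set (ι → ℤ)}
    (hS : Submodule.span ℤ S = ⊤) :
    Submodule.span R ((fun v i => (v i : R)) '' S) = ⊤ := by
  classical
  let f : (ι → ℤ) →ₗ[ℤ] (ι → R) := (Int.castAddHom R).toIntLinearMap.compLeft ι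
  have hf : ∀ v, f v ∈ Submodule.span R (f '' S) := fun v => by
    have : f v ∈ (Submodule.span ℤ S).map f := Submodule.mem_map_of_mem (hS ▸ Submodule.mem_top)
    rw [Submodule.map_span] at this
    exact Submodule.span_le_restrictScalars ℤ R _ this
  rw [eq_top_iff, ← (Pi.basisFun R ι).span_eq, Submodule.span_le]
  rintro _ ⟨i, rfl⟩
  have hsingle : f (Pi.single i 1) = Pi.basisFun R ι i := by
    ext j
    simp [f, Pi.single_apply]
  exact hsingle ▸ hf (Pi.single i 1)

theorem affineSpan_range_intCast_eq_top {κ : Type*} [Finite ι] (m : κ → ι → ℤ) (k : κ)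
    (hm : Submodule.span ℤ (range fun j => m j - m k) = ⊤) :
    affineSpan ℝ (range fun j i => (m j i : ℝ)) = ⊤ := by
  rw [AffineSubspace.affineSpan_eq_top_iff_vectorSpan_eq_top_of_nonempty ℝ _ _
      ⟨_, mem_range_self k⟩, vectorSpan_range_eq_span_range_vsub_right ℝ _ k,
    ← span_intCast_image_eq_top ℝ hm, ← range_comp]
  congr 2
  ext j i
  simp

section AffineRelation

variable {k V : Type*} [Field k] [AddCommGroup V] [Module k V]

def IsAffineRelation [Fintype ι] (p : ι → V) (w : ι → k) : Prop :=
  ∑ i, w i = 0 ∧ ∑ i, w i • p i = 0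

theorem span_range_one_prod_eq_top {p : ι → V} (hp : affineSpan k (range p) = ⊤) :
    Submodule.span k (range fun i => ((1 : k), p i)) = ⊤ := by
  set S := Submodule.span k (range fun i => ((1 : k), p i))
  obtain ⟨i₀⟩ : Nonempty ι := by
    by_contra h
    rw [not_nonempty_iff] at h
    simp [range_eq_empty] at hp
  have hpt : ∀ i, ((1 : k), p i) ∈ S := fun i => Submodule.subset_span (mem_range_self i)
  have hvec : vectorSpan k (range p) ≤ S.comap (LinearMap.inr k k V) := by
    rw [vectorSpan_range_eq_span_range_vsub_right k p i₀, Submodule.span_le]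
    rintro _ ⟨i, rfl⟩
    simpa using S.sub_mem (hpt i) (hpt i₀)
  rw [(AffineSubspace.affineSpan_eq_top_iff_vectorSpan_eq_top_of_nonempty k V V
    ⟨p i₀, mem_range_self i₀⟩).1 hp] at hvec
  refine eq_top_iff.2 fun ⟨a, v⟩ _ => ?_
  have hsplit : (a, v) = a • ((1 : k), p i₀) + (0, v - a • p i₀) := by simp
  rw [hsplit]
  exact S.add_mem (S.smul_mem a (hpt i₀)) (hvec (Submodule.mem_top))

theorem IsAffineRelation.exists_eq_smul [Fintype ι] [FiniteDimensional k V] {p : ι → V}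
    (hp : affineSpan k (range p) = ⊤) (hcard : Fintype.card ι = finrank k V + 2)
    {γ : ι → k} (hγ : IsAffineRelation p γ) (hγ0 : γ ≠ 0)
    {w : ι → k} (hw : IsAffineRelation p w) : ∃ c : k, w = c • γ := by
  -- Affine relations are the kernel of `w ↦ ∑ w i • (1, p i)`, which maps onto `k × V`.
  set T := Fintype.linearCombination k fun i => ((1 : k), p i)
  have hT : ∀ w, T w = 0 ↔ IsAffineRelation p w := fun w => by
    simp [T, Fintype.linearCombination_apply, IsAffineRelation, Prod.ext_iff, Prod.fst_sum,
      Prod.snd_sum]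
  have hker : finrank k (LinearMap.ker T) = 1 := by
    have := T.finrank_range_add_finrank_ker
    rw [Fintype.range_linearCombination, span_range_one_prod_eq_top hp, finrank_top,
      finrank_prod, finrank_self, finrank_fintype_fun_eq_card, hcard] at this
    omega
  obtain ⟨c, hc⟩ := (finrank_eq_one_iff_of_nonzero' (⟨γ, (hT γ).2 hγ⟩ : LinearMap.ker T)
    fun h => hγ0 (congrArg Subtype.val h)).1 hker ⟨w, (hT w).2 hw⟩
  exact ⟨c, (congrArg Subtype.val hc).symm⟩

theorem exists_weights_of_mem_convexHull_image [LinearOrder k] [IsStrictOrderedRing k]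
    [Fintype ι] [DecidableEq ι] {p : ι → V} {s : Set ι} {x : V}
    (hx : x ∈ convexHull k (p '' s)) :
    ∃ w : ι → k, (∀ i, 0 ≤ w i) ∧ (∀ i ∉ s, w i = 0) ∧ ∑ i, w i = 1 ∧ ∑ i, w i • p i = x := by
  suffices convexHull k (p '' s) ⊆ {x | ∃ w : ι → k, (∀ i, 0 ≤ w i) ∧ (∀ i ∉ s, w i = 0) ∧
      ∑ i, w i = 1 ∧ ∑ i, w i • p i = x} from this hx
  refine convexHull_min ?_ ?_
  · rintro _ ⟨i, hi, rfl⟩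
    refine ⟨Pi.single i 1, fun j => ?_, fun j hj => ?_, by simp, by simp [Pi.single_apply]⟩
    · by_cases h : j = i <;> simp [h]
    · simp [show j ≠ i by rintro rfl; exact hj hi]
  · rintro _ ⟨w, hw0, hws, hw1, rfl⟩ _ ⟨w', hw0', hws', hw1', rfl⟩ a b ha hb hab
    refine ⟨a • w + b • w', fun i => ?_, fun i hi => ?_, ?_, ?_⟩
    · simp only [Pi.add_apply, Pi.smul_apply, smul_eq_mul]
      have := hw0 i; have := hw0' i; positivity
    · simp [hws i hi, hws' i hi]
    · simp [sum_add_distrib, ← mul_sum, hw1, hw1', hab]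
    · simp [add_smul, sum_add_distrib, smul_sum, smul_smul]

theorem IsAffineRelation.mul_neg_of_mem_convexHull_image [LinearOrder k] [IsStrictOrderedRing k]
    [Fintype ι] [FiniteDimensional k V] {p : ι → V}
    (hp : affineSpan k (range p) = ⊤) (hcard : Fintype.card ι = finrank k V + 2)
    {γ : ι → k} (hγ : IsAffineRelation p γ) (hγ0 : ∀ i, γ i ≠ 0)
    {s : Set ι} {j : ι} (hj : j ∉ s) (hps : p j ∈ convexHull k (p '' s)) :
    ∀ i ≠ j, γ i * γ j < 0 := by
  classical
  obtain ⟨w, hw0, hws, hw1, hwp⟩ := exists_weights_of_mem_convexHull_image hps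
  have hrel : IsAffineRelation p (w - Pi.single j 1) := by
    constructor
    · simp [sum_sub_distrib, hw1]
    · simp [sub_smul, sum_sub_distrib, hwp, Pi.single_apply]
  obtain ⟨c, hc⟩ := hγ.exists_eq_smul hp hcard (fun h => hγ0 j (congrFun h j)) hrel
  have hcj : c * γ j = -1 := by simpa [hws j hj] using (congrFun hc j).symm
  intro i hi
  have hci : 0 < c * γ i := by
    have hwi : w i = c * γ i := by simpa [hi] using congrFun hc i
    refine lt_of_le_of_ne (hwi ▸ hw0 i) (Ne.symm (mul_ne_zero ?_ (hγ0 i)))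
    rintro rfl
    simp at hcj
  nlinarith [sq_nonneg c]

theorem IsAffineRelation.exists_pos_weights_of_mul_neg [LinearOrder k] [IsStrictOrderedRing k]
    [Fintype ι] [DecidableEq ι] {p : ι → V} {γ : ι → k} (hγ : IsAffineRelation p γ) {j : ι}
    (hγj : γ j ≠ 0) (hsign : ∀ i ≠ j, γ i * γ j < 0) :
    ∃ w : ι → k, (∀ i ≠ j, 0 < w i) ∧ ∑ i ∈ univ.erase j, w i = 1 ∧
      ∑ i ∈ univ.erase j, w i • p i = p j := by
  obtain ⟨hsum, hsump⟩ := hγ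
  refine ⟨fun i => γ i / -γ j, fun i hi => ?_, ?_, ?_⟩
  · rcases mul_neg_iff.1 (hsign i hi) with ⟨hi, hj⟩ | ⟨hi, hj⟩
    · exact div_pos hi (neg_pos.2 hj)
    · exact div_pos_of_neg_of_neg hi (neg_neg_iff_pos.2 hj)
  · rw [← sum_div, div_eq_one_iff_eq (neg_ne_zero.2 hγj)]
    linarith [add_sum_erase univ γ (mem_univ j)]
  · have hrest : ∑ i ∈ univ.erase j, γ i • p i = -γ j • p j := by
      rw [neg_smul, eq_neg_iff_add_eq_zero, add_comm,
        add_sum_erase _ (fun i => γ i • p i) (mem_univ j), hsump]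
    simp_rw [div_eq_inv_mul, mul_smul, ← smul_sum, hrest, smul_smul,
      inv_mul_cancel₀ (neg_ne_zero.2 hγj), one_smul]

theorem affineIndependent_of_affineSpan_eq_top [Fintype ι] [FiniteDimensional k V] {p : ι → V}
    (hp : affineSpan k (range p) = ⊤) (hcard : Fintype.card ι = finrank k V + 1) :
    AffineIndependent k p := by
  obtain ⟨i⟩ : Nonempty ι := Fintype.card_pos_iff.1 (by omega)
  rw [affineIndependent_iff_finrank_vectorSpan_eq k p hcard,
    (AffineSubspace.affineSpan_eq_top_iff_vectorSpan_eq_top_of_nonempty k V V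
      ⟨p i, mem_range_self i⟩).1 hp, finrank_top]

end AffineRelation

section Interior

variable {E : Type*} [NormedAddCommGroup E] [NormedSpace ℝ E]

theorem AffineBasis.sum_smul_mem_interior_convexHull [Fintype ι] (b : AffineBasis ι ℝ E)
    {w : ι → ℝ} (hw : ∀ i, 0 < w i) (hw1 : ∑ i, w i = 1) :
    ∑ i, w i • b i ∈ interior (convexHull ℝ (range b)) := by
  rw [b.interior_convexHull]
  intro i
  rw [← univ.affineCombination_eq_linear_combination _ _ hw1,
    b.coord_apply_combination_of_mem (mem_univ i) hw1]
  exact hw i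

theorem IsAffineRelation.simplex_erase_of_mul_neg [Fintype ι] [DecidableEq ι]
    [FiniteDimensional ℝ E] {p : ι → E} (hp : affineSpan ℝ (range p) = ⊤)
    (hcard : Fintype.card ι = finrank ℝ E + 2) {γ : ι → ℝ} (hγ : IsAffineRelation p γ) {j : ι}
    (hγj : γ j ≠ 0) (hsign : ∀ i ≠ j, γ i * γ j < 0) :
    AffineIndependent ℝ (fun i : univ.erase j => p i) ∧
      convexHull ℝ (p '' ↑(univ.erase j)) = convexHull ℝ (range p) ∧
      p j ∈ interior (convexHull ℝ (range p)) := by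
  obtain ⟨w, hw0, hw1, hwp⟩ := hγ.exists_pos_weights_of_mul_neg hγj hsign
  set s := univ.erase j
  have hrange : range (fun i : s => p i) = p '' s := by ext; simp
  have hmem : p j ∈ convexHull ℝ (p '' s) := by
    rw [← hwp, ← centerMass_eq_of_sum_1 _ _ hw1]
    exact s.centerMass_mem_convexHull (fun i hi => (hw0 i (ne_of_mem_erase hi)).le)
      (by rw [hw1]; exact one_pos) (fun i hi => mem_image_of_mem p hi)
  have hhull : convexHull ℝ (p '' s) = convexHull ℝ (range p) := by
    refine (convexHull_mono (image_subset_range p _)).antisymm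
      (convexHull_min ?_ (convex_convexHull ℝ _))
    rintro _ ⟨i, rfl⟩
    by_cases hi : i = j
    · exact hi ▸ hmem
    · exact subset_convexHull ℝ _ (mem_image_of_mem p (by simpa [s] using hi))
  have hspan : affineSpan ℝ (range fun i : s => p i) = ⊤ := by
    rw [hrange, ← affineSpan_convexHull, hhull, affineSpan_convexHull, hp]
  have hind : AffineIndependent ℝ (fun i : s => p i) :=
    affineIndependent_of_affineSpan_eq_top hspan (by simp [s, hcard])
  refine ⟨hind, hhull, ?_⟩
  have := (AffineBasis.mk _ hind hspan).sum_smul_mem_interior_convexHull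
    (fun i => hw0 i (ne_of_mem_erase i.2)) (by rw [sum_coe_sort s w, hw1])
  change ∑ i : s, w i • p i ∈ interior (convexHull ℝ (range fun i : s => p i)) at this
  rwa [hrange, hhull, sum_coe_sort s (fun i => w i • p i), hwp] at this

end Interior

theorem simplex_iff_one_negative_entry_general (d : ℕ) (γ : Fin (d + 2) → ℤ)
    (hγ0 : ∀ j, γ j ≠ 0) (hsum : ∑ j, γ j = 0)
    (m : Fin (d + 2) → Fin d → ℤ)
    (hrelm : ∀ i, ∑ j, γ j * m j i = 0)
    (hspan : ∀ k : Fin (d + 2),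
      Submodule.span ℤ {v : Fin d → ℤ | ∃ j, v = m j - m k} = ⊤)
    (mR : Fin (d + 2) → Fin d → ℝ)
    (hmR : ∀ j i, mR j i = (m j i : ℝ)) :
    ((∃ s : Finset (Fin (d + 2)), s.card = d + 1 ∧
        AffineIndependent ℝ (fun i : s => mR i) ∧
        convexHull ℝ (mR '' ↑s) = convexHull ℝ (Set.range mR)) ↔
      ((Finset.univ.filter fun j => γ j < 0).card = 1 ∨
        (Finset.univ.filter fun j => 0 < γ j).card = 1)) ∧
    (∀ k : Fin (d + 2),
      ((Finset.univ.filter fun j => γ j < 0) = {k} ∨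
        (Finset.univ.filter fun j => 0 < γ j) = {k}) →
      mR k ∈ interior (convexHull ℝ (Set.range mR))) := by
  obtain rfl : mR = fun j i => (m j i : ℝ) := funext fun j => funext (hmR j)
  have hp := affineSpan_range_intCast_eq_top m 0 (by simpa [Set.range, eq_comm] using hspan 0)
  have hcard : Fintype.card (Fin (d + 2)) = finrank ℝ (Fin d → ℝ) + 2 := by simp
  have hγR0 : ∀ j, (γ j : ℝ) ≠ 0 := fun j => Int.cast_ne_zero.2 (hγ0 j)
  have hrel : IsAffineRelation (fun j i => (m j i : ℝ)) fun j => (γ j : ℝ) := by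
    refine ⟨by simpa using congrArg (Int.cast : ℤ → ℝ) hsum, funext fun i => ?_⟩
    simpa [Finset.sum_apply] using congrArg (Int.cast : ℤ → ℝ) (hrelm i)
  have hsign : ∀ k, ((univ.filter fun j => γ j < 0) = {k} ∨
      (univ.filter fun j => 0 < γ j) = {k}) ↔ ∀ j ≠ k, (γ j : ℝ) * γ k < 0 := fun k => by
    rw [filter_neg_eq_singleton_or_filter_pos_eq_singleton_iff hγ0]
    exact_mod_cast Iff.rfl
  refine ⟨⟨?_, ?_⟩, fun k hk =>
    (hrel.simplex_erase_of_mul_neg hp hcard (hγR0 k) ((hsign k).1 hk)).2.2⟩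
  · rintro ⟨s, hs, -, hhull⟩
    obtain ⟨k, -, hk⟩ := exists_mem_notMem_of_card_lt_card (s := s) (t := univ) (by simp [hs])
    have hmk := hhull ▸ subset_convexHull ℝ _ (mem_range_self k)
    rcases (hsign k).2 (hrel.mul_neg_of_mem_convexHull_image hp hcard hγR0 hk hmk) with h | h <;>
      simp [h]
  · intro h
    obtain ⟨k, hk⟩ : ∃ k, (univ.filter fun j => γ j < 0) = {k} ∨
        (univ.filter fun j => 0 < γ j) = {k} := by
      rcases h with h | h <;> obtain ⟨k, hk⟩ := card_eq_one.1 h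
      exacts [⟨k, Or.inl hk⟩, ⟨k, Or.inr hk⟩]
    obtain ⟨hind, hhull, -⟩ := hrel.simplex_erase_of_mul_neg hp hcard (hγR0 k) ((hsign k).1 hk)
    exact ⟨univ.erase k, by simp, hind, hhull⟩

/-- **`Δ` is a simplex iff `±γ` has a unique negative entry, and the
corresponding point is interior.**
Let `γ ∈ ℤ^l` (`l = d + 2`) be a prime gamma vector with associated points
`m_1, …, m_l ∈ ℤ^d` satisfying `∑ γ_j m_j = 0`, whose pairwise differences
from any fixed `m_k` span `ℤ^d`, and let `Δ ⊂ ℝ^d` be their convex hull.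
Then `Δ` is a simplex iff `γ` or `−γ` has exactly one negative entry, and if
`γ_k` is the unique negative (resp. unique positive) entry then `m_k` lies in
the interior of `Δ`. -/
theorem simplex_iff_one_negative_entry (d : ℕ) (γ : Fin (d + 2) → ℤ)
    (hγ0 : ∀ j, γ j ≠ 0) (hsum : ∑ j, γ j = 0)
    (hgcd : Finset.univ.gcd γ = 1)
    (m : Fin (d + 2) → Fin d → ℤ)
    (hrelm : ∀ i, ∑ j, γ j * m j i = 0)
    (hspan : ∀ k : Fin (d + 2),
      Submodule.span ℤ {v : Fin d → ℤ | ∃ j, v = m j - m k} = ⊤)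
    (mR : Fin (d + 2) → Fin d → ℝ)
    (hmR : ∀ j i, mR j i = (m j i : ℝ)) :
    ((∃ s : Finset (Fin (d + 2)), s.card = d + 1 ∧
        AffineIndependent ℝ (fun i : s => mR i) ∧
        convexHull ℝ (mR '' ↑s) = convexHull ℝ (Set.range mR)) ↔
      ((Finset.univ.filter fun j => γ j < 0).card = 1 ∨
        (Finset.univ.filter fun j => 0 < γ j).card = 1)) ∧
    (∀ k : Fin (d + 2),
      ((Finset.univ.filter fun j => γ j < 0) = {k} ∨
        (Finset.univ.filter fun j => 0 < γ j) = {k}) →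
      mR k ∈ interior (convexHull ℝ (Set.range mR))) :=
  simplex_iff_one_negative_entry_general d γ hγ0 hsum m hrelm hspan mR hmR
end

section
/- Let γ ∈ ℤ^l be a prime gamma vector, m_1,…,m_l ∈ ℤ^d (d = l−2) with ∑ γ_j (1, m_j) = 0 generating all integral relations among the (1, m_j). Let u ∈ (ℂ^×)^l and consider F_u(x) = ∑_{j=1}^l u_j x^{m_j} on the torus (ℂ^×)^d. A point x ∈ (ℂ^×)^d is a singular point of the hypersurface {F_u = 0} (i.e. F_u(x) = 0 and all partial derivatives x_i ∂F_u/∂x_i vanish at x) if and only if (u_1 x^{m_1}, …, u_l x^{m_l}) = c·(γ_1, …, γ_l) for some c ∈ ℂ^×. Consequently, if ∏_j u_j^{γ_j} ≠ ∏_j γ_j^{γ_j}, the hypersurface {F_u = 0} ⊂ (ℂ^×)^d is smooth. -/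
/-!
Put `v_j = u_j x^{m_j}`. The point `x` is singular exactly when `v` satisfies every linear
relation of the vectors `(1, m_j)`, i.e. lies in the complex kernel of the integer matrix with
columns `(1, m_j)`. That kernel is `ℂ·γ`: clearing denominators takes the hypothesis from the
integral to the rational kernel, and composing with the `ℚ`-linear functionals `ℂ → ℚ`, which
separate points, takes it from the rational to the complex kernel. Finally, if
`u_j x^{m_j} = c γ_j`, then in `∏ (u_j x^{m_j})^{γ_j}` both `c` and `x` cancel, because
`∑ γ_j = 0` and `∑ γ_j m_j = 0`, leaving `∏ u_j^{γ_j} = ∏ γ_j^{γ_j}`.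
-/

open Finset
open scoped Matrix

section Kernel

variable {ι κ : Type*}

theorem Module.exists_eq_smul_of_forall_dual_comp {K V : Type*} [Field K] [AddCommGroup V]
    [Module K V] {γ : ι → K} {v : ι → V} (h : ∀ φ : Module.Dual K V, ∃ t : K, φ ∘ v = t • γ) :
    ∃ w : V, ∀ j, v j = γ j • w := by
  by_cases hγ : γ = 0
  · refine ⟨0, fun j => ?_⟩
    rw [smul_zero, ← Module.forall_dual_apply_eq_zero_iff K]
    intro φ
    obtain ⟨t, ht⟩ := h φ
    simpa [hγ] using congrFun ht j
  · obtain ⟨j₀, hj₀⟩ : ∃ j, γ j ≠ 0 := Function.ne_iff.mp hγ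
    refine ⟨(γ j₀)⁻¹ • v j₀, fun j => ?_⟩
    rw [← sub_eq_zero, ← Module.forall_dual_apply_eq_zero_iff K]
    intro φ
    obtain ⟨t, ht⟩ := h φ
    have hφv : ∀ j, φ (v j) = t * γ j := fun j => by simpa using congrFun ht j
    simp only [map_sub, map_smul, hφv, smul_eq_mul]
    field_simp
    ring

variable [Fintype ι]

theorem Matrix.exists_eq_smul_of_mulVec_map_eq_zero_of_isFractionRing {R K : Type*} [CommRing R]
    [IsDomain R] [Field K] [Algebra R K] [IsFractionRing R K] {A : Matrix κ ι R} {γ : ι → R}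
    (hker : ∀ r, A *ᵥ r = 0 → ∃ c : R, r = c • γ) {v : ι → K}
    (hv : A.map (algebraMap R K) *ᵥ v = 0) : ∃ c : K, v = c • (algebraMap R K ∘ γ) := by
  obtain ⟨⟨b, hb⟩, hbv⟩ := IsLocalization.exist_integer_multiples_of_finite (nonZeroDivisors R) v
  choose r hr using hbv
  have hb0 : algebraMap R K b ≠ 0 := IsFractionRing.to_map_ne_zero_of_mem_nonZeroDivisors hb
  obtain ⟨c, rfl⟩ := hker r <| funext fun k => IsFractionRing.injective R K <| by
    rw [RingHom.map_mulVec, show algebraMap R K ∘ r = b • v from funext hr, Matrix.mulVec_smul, hv]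
    simp
  refine ⟨algebraMap R K c / algebraMap R K b, funext fun j => ?_⟩
  have hrj := hr j
  simp only [Pi.smul_apply, smul_eq_mul, map_mul, Algebra.smul_def] at hrj
  simp only [Pi.smul_apply, Function.comp_apply, smul_eq_mul]
  field_simp
  linear_combination -hrj

theorem Matrix.exists_eq_smul_of_mulVec_map_eq_zero_of_algebra {K L : Type*} [Field K] [CommRing L]
    [Algebra K L] {A : Matrix κ ι K} {γ : ι → K} (hker : ∀ r, A *ᵥ r = 0 → ∃ c : K, r = c • γ)
    {v : ι → L} (hv : A.map (algebraMap K L) *ᵥ v = 0) :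
    ∃ c : L, v = c • (algebraMap K L ∘ γ) := by
  obtain ⟨w, hw⟩ := Module.exists_eq_smul_of_forall_dual_comp (K := K) (v := v) fun φ => hker _ <|
    funext fun k => by
      simpa [Matrix.mulVec, dotProduct, ← Algebra.smul_def] using congrArg φ (congrFun hv k)
  exact ⟨w, funext fun j => by simp [hw j, Algebra.smul_def, mul_comm]⟩

theorem Matrix.mulVec_map_intCast_eq_zero_iff {L : Type*} [Field L] [CharZero L]
    {A : Matrix κ ι ℤ} {γ : ι → ℤ} (hker : ∀ r, A *ᵥ r = 0 ↔ ∃ c : ℤ, r = c • γ) {v : ι → L} :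
    A.map (Int.cast : ℤ → L) *ᵥ v = 0 ↔ ∃ c : L, v = c • ((↑) ∘ γ) := by
  constructor
  · intro hv
    have hker_ℚ (r : ι → ℚ) (hr : A.map (algebraMap ℤ ℚ) *ᵥ r = 0) :=
      exists_eq_smul_of_mulVec_map_eq_zero_of_isFractionRing (fun r => (hker r).1) hr
    obtain ⟨c, hc⟩ := exists_eq_smul_of_mulVec_map_eq_zero_of_algebra (v := v) hker_ℚ <| by
      simpa [Matrix.map_map] using hv
    exact ⟨c, by simpa [Function.comp_def] using hc⟩
  · rintro ⟨c, rfl⟩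
    have hγ : A *ᵥ γ = 0 := (hker γ).2 ⟨1, (one_smul ℤ γ).symm⟩
    funext k
    simpa [Matrix.mulVec_smul, hγ] using
      congrArg (c * ·) (RingHom.map_mulVec (Int.castRingHom L) A γ k)

end Kernel

section Circuit

variable {ι σ : Type*}

theorem prod_zpow_eq_zpow_sum_of_ne_zero {G₀ : Type*} [CommGroupWithZero G₀] {a : G₀} (ha : a ≠ 0)
    (s : Finset ι) (f : ι → ℤ) : ∏ j ∈ s, a ^ f j = a ^ ∑ j ∈ s, f j := by
  classical
  induction s using Finset.induction_on with
  | empty => simp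
  | insert j s hj ih => rw [prod_insert hj, sum_insert hj, ih, zpow_add₀ ha]

variable [Fintype ι]

/-- The matrix with columns `(1, m_j)`; its row `none` is the row of ones. -/
def circuitMatrix (m : ι → σ → ℤ) : Matrix (Option σ) ι ℤ :=
  Matrix.of fun k j => k.elim 1 (m j)

theorem mulVec_map_circuitMatrix_eq_zero_iff {R : Type*} [CommRing R] (m : ι → σ → ℤ)
    (v : ι → R) :
    (circuitMatrix m).map (Int.cast : ℤ → R) *ᵥ v = 0 ↔
      (∑ j, v j = 0) ∧ ∀ i, ∑ j, (m j i : R) * v j = 0 := by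
  simp [funext_iff, Option.forall, circuitMatrix, Matrix.mulVec, dotProduct]

variable [Fintype σ]

theorem prod_monomial_zpow_eq_one {G₀ : Type*} [CommGroupWithZero G₀] {x : σ → G₀}
    (hx : ∀ i, x i ≠ 0) {m : ι → σ → ℤ} {γ : ι → ℤ} (hγm : ∀ i, ∑ j, γ j * m j i = 0) :
    ∏ j, (∏ i, x i ^ m j i) ^ γ j = 1 := by
  simp_rw [← prod_zpow, ← zpow_mul]
  rw [prod_comm]
  refine prod_eq_one fun i _ => ?_
  rw [prod_zpow_eq_zpow_sum_of_ne_zero (hx i)]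
  simp_rw [mul_comm (m _ i), hγm i, zpow_zero]

theorem prod_zpow_eq_prod_zpow_self_of_mul_monomial_eq {K : Type*} [Field K] {γ : ι → ℤ}
    {m : ι → σ → ℤ} (hsum : ∑ j, γ j = 0) (hγm : ∀ i, ∑ j, γ j * m j i = 0) {u : ι → K}
    {x : σ → K} (hx : ∀ i, x i ≠ 0) {c : K} (hc : c ≠ 0)
    (h : ∀ j, u j * ∏ i, x i ^ m j i = c * γ j) :
    ∏ j, u j ^ γ j = ∏ j, (γ j : K) ^ γ j :=
  calc ∏ j, u j ^ γ j = (∏ j, u j ^ γ j) * ∏ j, (∏ i, x i ^ m j i) ^ γ j := by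
        rw [prod_monomial_zpow_eq_one hx hγm, mul_one]
    _ = ∏ j, (c * γ j) ^ γ j := by simp_rw [← prod_mul_distrib, ← mul_zpow, h]
    _ = c ^ (∑ j, γ j) * ∏ j, (γ j : K) ^ γ j := by
        rw [← prod_zpow_eq_zpow_sum_of_ne_zero hc, ← prod_mul_distrib]
        simp_rw [mul_zpow]
    _ = ∏ j, (γ j : K) ^ γ j := by rw [hsum, zpow_zero, one_mul]

end Circuit

theorem circuit_singular_point_characterisation_general (d : ℕ) (γ : Fin (d + 2) → ℤ)
    (m : Fin (d + 2) → Fin d → ℤ)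
    (hrel : ∀ r : Fin (d + 2) → ℤ,
      ((∑ j, r j = 0) ∧ (∀ i, ∑ j, r j * m j i = 0)) ↔ ∃ c : ℤ, r = c • γ)
    (u : Fin (d + 2) → ℂ) (hu : ∀ j, u j ≠ 0) :
    (∀ x : Fin d → ℂ, (∀ i, x i ≠ 0) →
      (((∑ j, u j * ∏ i, x i ^ m j i) = 0 ∧
          ∀ i, (∑ j, (m j i : ℂ) * (u j * ∏ i', x i' ^ m j i')) = 0) ↔
        ∃ c : ℂ, c ≠ 0 ∧ ∀ j, u j * ∏ i, x i ^ m j i = c * γ j)) ∧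
    ((∏ j, u j ^ γ j) ≠ (∏ j, (γ j : ℂ) ^ γ j) →
      ∀ x : Fin d → ℂ, (∀ i, x i ≠ 0) →
        ¬((∑ j, u j * ∏ i, x i ^ m j i) = 0 ∧
          ∀ i, (∑ j, (m j i : ℂ) * (u j * ∏ i', x i' ^ m j i')) = 0)) := by
  have hker : ∀ r, circuitMatrix m *ᵥ r = 0 ↔ ∃ c : ℤ, r = c • γ := fun r => by
    rw [← hrel]
    exact (mulVec_map_circuitMatrix_eq_zero_iff m r).trans (by simp_rw [Int.cast_id, mul_comm])
  have singular_iff (x : Fin d → ℂ) (hx : ∀ i, x i ≠ 0) :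
      ((∑ j, u j * ∏ i, x i ^ m j i) = 0 ∧
          ∀ i, (∑ j, (m j i : ℂ) * (u j * ∏ i', x i' ^ m j i')) = 0) ↔
        ∃ c : ℂ, c ≠ 0 ∧ ∀ j, u j * ∏ i, x i ^ m j i = c * γ j := by
    have hv₀ : u 0 * ∏ i, x i ^ m 0 i ≠ 0 :=
      mul_ne_zero (hu 0) (prod_ne_zero_iff.mpr fun i _ => zpow_ne_zero _ (hx i))
    rw [← mulVec_map_circuitMatrix_eq_zero_iff, Matrix.mulVec_map_intCast_eq_zero_iff hker]
    simp only [funext_iff, Pi.smul_apply, Function.comp_apply, smul_eq_mul]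
    refine ⟨fun ⟨c, hc⟩ => ⟨c, ?_, hc⟩, fun ⟨c, _, hc⟩ => ⟨c, hc⟩⟩
    rintro rfl
    exact hv₀ (by simpa using hc 0)
  refine ⟨singular_iff, fun hne x hx hsing => hne ?_⟩
  obtain ⟨c, hc, hcγ⟩ := (singular_iff x hx).mp hsing
  obtain ⟨hsum, hγm⟩ := (hrel γ).mpr ⟨1, (one_smul ℤ γ).symm⟩
  exact prod_zpow_eq_prod_zpow_self_of_mul_monomial_eq hsum hγm hx hc hcγ

/-- **Singular points of the circuit hypersurface.**
Let `γ ∈ ℤ^l` (`l = d + 2`) be a prime gamma vector and `m_1, …, m_l ∈ ℤ^d`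
be such that the lattice of integral relations among the `(1, m_j)` is `ℤ·γ`.
Fix `u ∈ (ℂ^×)^l` and set `F_u(x) = ∑ u_j x^{m_j}` on the torus `(ℂ^×)^d`.
A point `x` of the torus is a singular point of `{F_u = 0}` (i.e. `F_u(x) = 0`
and all logarithmic partials `x_i ∂F_u/∂x_i = ∑_j m_{ij} u_j x^{m_j}` vanish)
iff `(u_j x^{m_j})_j = c·γ` for some `c ≠ 0`.  Consequently, if
`∏ u_j^{γ_j} ≠ ∏ γ_j^{γ_j}`, then `{F_u = 0}` is smooth. -/
theorem circuit_singular_point_characterisation (d : ℕ) (γ : Fin (d + 2) → ℤ)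
    (hγ0 : ∀ j, γ j ≠ 0) (hsum : ∑ j, γ j = 0)
    (hgcd : Finset.univ.gcd γ = 1)
    (m : Fin (d + 2) → Fin d → ℤ)
    (hrel : ∀ r : Fin (d + 2) → ℤ,
      ((∑ j, r j = 0) ∧ (∀ i, ∑ j, r j * m j i = 0)) ↔ ∃ c : ℤ, r = c • γ)
    (u : Fin (d + 2) → ℂ) (hu : ∀ j, u j ≠ 0) :
    (∀ x : Fin d → ℂ, (∀ i, x i ≠ 0) →
      (((∑ j, u j * ∏ i, x i ^ m j i) = 0 ∧
          ∀ i, (∑ j, (m j i : ℂ) * (u j * ∏ i', x i' ^ m j i')) = 0) ↔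
        ∃ c : ℂ, c ≠ 0 ∧ ∀ j, u j * ∏ i, x i ^ m j i = c * γ j)) ∧
    ((∏ j, u j ^ γ j) ≠ (∏ j, (γ j : ℂ) ^ γ j) →
      ∀ x : Fin d → ℂ, (∀ i, x i ≠ 0) →
        ¬((∑ j, u j * ∏ i, x i ^ m j i) = 0 ∧
          ∀ i, (∑ j, (m j i : ℂ) * (u j * ∏ i', x i' ^ m j i')) = 0)) :=
  circuit_singular_point_characterisation_general d γ m hrel u hu
end

section
/- Let γ = (γ_1,…,γ_l) ∈ ℤ^l be a prime gamma vector with unique negative entry γ_1, and let m_1,…,m_l ∈ ℤ^d, k_1,…,k_l ∈ ℤ be as in a toric model (∑γ_j(1,m_j)=0 generating all relations, ∑γ_j k_j = 1). Set g = (γ_1 t^{k_1} x^{m_1})^{-1} ∑_{j=2}^l γ_j t^{k_j} x^{m_j}, a Laurent polynomial in x with coefficients in ℂ[t^{±1}]. Then for n ≥ 0, the constant term (coefficient of x^0) of g^n vanishes unless n = −γ_1 h for some integer h ≥ 0, in which case it equals the multinomial coefficient binom(−γ_1 h; γ_2 h, …, γ_l h) times (Γ t)^h, where Γ = ∏_j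 γ_j^{γ_j}. -/
open Finset

/-! Expanding `g ^ n` by the multinomial theorem, the term indexed by `a : ι → ℕ` (with `∑ a = n`)
is a monomial of `x`-degree `∑ a_j (m_j - m_0)` and `t`-degree `∑ a_j (k_j - k_0)`. The `x`-degree
vanishes exactly when `(-n, a_1, …)` is a relation among the `(1, m_j)`, i.e. equals `e • γ` for an
integer `e`; the `t`-degree is then `e ∑ γ_j k_j = e`. Hence the coefficient of `x^0 t^e` has a
single contribution, from `a = e γ`, and only when `n = -γ_0 e`; since `∑ γ_j = 0`, the product
`∏ (γ_j / γ_0)^{e γ_j}` of its coefficients is `Γ^e`. -/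

namespace AddMonoidAlgebra

variable {R G ι : Type*} [CommSemiring R] [AddCommMonoid G] [DecidableEq ι]

theorem sum_single_pow (s : Finset ι) (v : ι → G) (c : ι → R) (n : ℕ) :
    (∑ j ∈ s, single (v j) (c j)) ^ n =
      ∑ a ∈ s.piAntidiag n,
        single (∑ j ∈ s, a j • v j) (Nat.multinomial s a * ∏ j ∈ s, c j ^ a j) := by
  rw [sum_pow_eq_sum_piAntidiag]
  refine sum_congr rfl fun a _ => ?_
  simp only [single_pow, prod_single, ← nsmul_eq_mul, smul_single]

theorem coeff_sum_single_pow [DecidableEq G] (s : Finset ι) (v : ι → G) (c : ι → R) (n : ℕ)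
    (p : G) :
    ((∑ j ∈ s, single (v j) (c j)) ^ n).coeff p =
      ∑ a ∈ s.piAntidiag n with ∑ j ∈ s, a j • v j = p,
        Nat.multinomial s a * ∏ j ∈ s, c j ^ a j := by
  rw [sum_single_pow, coeff_sum, Finsupp.finsetSum_apply, sum_filter]
  exact sum_congr rfl fun a _ => by rw [coeff_single, Finsupp.single_apply]

end AddMonoidAlgebra

theorem Finset.prod_zpow_eq_zpow_sum₀ {ι G₀ : Type*} [CommGroupWithZero G₀] {b : G₀} (hb : b ≠ 0)
    (s : Finset ι) (f : ι → ℤ) : ∏ j ∈ s, b ^ f j = b ^ ∑ j ∈ s, f j := by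
  induction s using Finset.cons_induction with
  | empty => simp
  | cons i s hi ih => rw [prod_cons, sum_cons, ih, zpow_add₀ hb]

section ToricModel

variable {ι κ : Type*} [Fintype ι] [DecidableEq ι] (i₀ : ι)

theorem prod_erase_div_zpow {K : Type*} [Field K] {x : ι → K} (hx : x i₀ ≠ 0) {γ : ι → ℤ}
    (hγ : ∑ j, γ j = 0) : ∏ j ∈ univ.erase i₀, (x j / x i₀) ^ γ j = ∏ j, x j ^ γ j := by
  have hsum : ∑ j ∈ univ.erase i₀, γ j = -γ i₀ := by
    rw [sum_erase_eq_sub (mem_univ i₀), hγ, zero_sub]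
  simp_rw [div_zpow]
  rw [prod_div_distrib, prod_zpow_eq_zpow_sum₀ hx, hsum, zpow_neg, div_inv_eq_mul,
    prod_erase_mul _ _ (mem_univ i₀)]

-- The monomial `∏ j ≠ i₀, (x ^ m j / x ^ m i₀) ^ a j` is `x ^ ∑ j, relationVector i₀ n a j • m j`.
def relationVector (n : ℕ) (a : ι → ℕ) : ι → ℤ :=
  Function.update (fun j => (a j : ℤ)) i₀ (-n)

variable {i₀} {n : ℕ} {a : ι → ℕ}

theorem sum_relationVector_mul (ha : a ∈ (univ.erase i₀).piAntidiag n) (f : ι → ℤ) :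
    ∑ j, relationVector i₀ n a j * f j = ∑ j ∈ univ.erase i₀, (a j : ℤ) * (f j - f i₀) := by
  have hn : ∑ j ∈ univ.erase i₀, (a j : ℤ) = n := by exact_mod_cast (mem_piAntidiag.1 ha).1
  rw [← add_sum_erase _ _ (mem_univ i₀),
    sum_congr rfl fun j hj => by rw [relationVector, Function.update_of_ne (ne_of_mem_erase hj)]]
  simp only [relationVector, Function.update_self, mul_sub, sum_sub_distrib, ← sum_mul, hn]
  ring

variable {γ : ι → ℤ} {m : ι → κ → ℤ} {k : ι → ℤ}

theorem sum_smul_sub_eq_iff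
    (hrel : ∀ r : ι → ℤ,
      ((∑ j, r j = 0) ∧ (∀ i, ∑ j, r j * m j i = 0)) ↔ ∃ c : ℤ, r = c • γ)
    (hk : ∑ j, γ j * k j = 1) (ha : a ∈ (univ.erase i₀).piAntidiag n) (e : ℤ) :
    ∑ j ∈ univ.erase i₀, a j • (m j - m i₀, k j - k i₀) = ((0 : κ → ℤ), e) ↔
      relationVector i₀ n a = e • γ := by
  set r := relationVector i₀ n a
  have hr := sum_relationVector_mul ha
  have hr_sum : ∑ j, r j = 0 := by simpa using hr 1
  have hr_k (c : ℤ) (hc : r = c • γ) : ∑ j, r j * k j = c := by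
    simp [hc, mul_assoc, ← mul_sum, hk]
  have hexp : ∑ j ∈ univ.erase i₀, a j • (m j - m i₀, k j - k i₀) =
      (fun i => ∑ j, r j * m j i, ∑ j, r j * k j) := by
    ext i <;> simp [r, hr, Prod.fst_sum, Prod.snd_sum, Finset.sum_apply, nsmul_eq_mul]
  rw [hexp, Prod.mk.injEq, funext_iff]
  constructor
  · rintro ⟨hm, hke⟩
    obtain ⟨c, hc⟩ := (hrel r).1 ⟨hr_sum, hm⟩
    rwa [← hke, hr_k c hc]
  · intro hc
    exact ⟨((hrel r).2 ⟨e, hc⟩).2, hr_k e hc⟩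

theorem relationVector_eq_smul_iff (hneg : γ i₀ < 0) (hpos : ∀ j, j ≠ i₀ → 0 ≤ γ j)
    (ha : a ∈ (univ.erase i₀).piAntidiag n) (e : ℤ) :
    relationVector i₀ n a = e • γ ↔ (n : ℤ) = -γ i₀ * e ∧ a = fun j => (γ j * e).toNat := by
  constructor
  · intro h
    have hn : (n : ℤ) = -γ i₀ * e := by
      have := congrFun h i₀
      simp only [relationVector, Function.update_self, Pi.smul_apply, smul_eq_mul] at this
      linarith
    have he : 0 ≤ e := by nlinarith
    refine ⟨hn, funext fun j => ?_⟩
    rcases eq_or_ne j i₀ with rfl | hj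
    · have ha₀ : a j = 0 := by
        by_contra h
        exact notMem_erase j univ ((mem_piAntidiag.1 ha).2 j h)
      rw [ha₀, Int.toNat_of_nonpos (by nlinarith)]
    · have := congrFun h j
      simp only [relationVector, Function.update_of_ne hj, Pi.smul_apply, smul_eq_mul] at this
      rw [mul_comm] at this
      omega
  · rintro ⟨hn, rfl⟩
    have he : 0 ≤ e := by nlinarith
    funext j
    rcases eq_or_ne j i₀ with rfl | hj
    · simp [relationVector, hn, mul_comm]
    · simp [relationVector, hj, mul_comm, mul_nonneg he (hpos j hj)]

theorem toNat_mul_mem_piAntidiag (hsum : ∑ j, γ j = 0) (hneg : γ i₀ < 0)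
    (hpos : ∀ j, j ≠ i₀ → 0 ≤ γ j) {e : ℤ} (hn : (n : ℤ) = -γ i₀ * e) :
    (fun j => (γ j * e).toNat) ∈ (univ.erase i₀).piAntidiag n := by
  have he : 0 ≤ e := by nlinarith
  refine mem_piAntidiag.2 ⟨?_, fun j hj => mem_erase.2 ⟨?_, mem_univ j⟩⟩
  · have : ∑ j ∈ univ.erase i₀, ((γ j * e).toNat : ℤ) = n := by
      rw [sum_congr rfl fun j hj =>
          Int.toNat_of_nonneg (mul_nonneg (hpos j (ne_of_mem_erase hj)) he),
        ← sum_mul, sum_erase_eq_sub (mem_univ i₀), hsum, hn, zero_sub]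
    exact_mod_cast this
  · rintro rfl
    exact hj (Int.toNat_of_nonpos (by nlinarith))

open Classical in
theorem filter_sum_smul_sub_eq
    (hrel : ∀ r : ι → ℤ,
      ((∑ j, r j = 0) ∧ (∀ i, ∑ j, r j * m j i = 0)) ↔ ∃ c : ℤ, r = c • γ)
    (hk : ∑ j, γ j * k j = 1) (hneg : γ i₀ < 0) (hpos : ∀ j, j ≠ i₀ → 0 ≤ γ j)
    (n : ℕ) (e : ℤ) :
    {a ∈ (univ.erase i₀).piAntidiag n |
        ∑ j ∈ univ.erase i₀, a j • (m j - m i₀, k j - k i₀) = ((0 : κ → ℤ), e)} =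
      if (n : ℤ) = -γ i₀ * e then {fun j => (γ j * e).toNat} else ∅ := by
  have hsum : ∑ j, γ j = 0 := ((hrel γ).2 ⟨1, (one_smul ℤ γ).symm⟩).1
  rw [filter_congr fun a ha => (sum_smul_sub_eq_iff hrel hk ha e).trans
    (relationVector_eq_smul_iff hneg hpos ha e)]
  split_ifs with hn
  · simp only [hn, true_and]
    rw [filter_eq', if_pos (toNat_mul_mem_piAntidiag hsum hneg hpos hn)]
  · simp only [hn, false_and, filter_false]

theorem coeff_sum_single_sub_pow {R : Type*} [CommSemiring R]
    (hrel : ∀ r : ι → ℤ,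
      ((∑ j, r j = 0) ∧ (∀ i, ∑ j, r j * m j i = 0)) ↔ ∃ c : ℤ, r = c • γ)
    (hk : ∑ j, γ j * k j = 1) (hneg : γ i₀ < 0) (hpos : ∀ j, j ≠ i₀ → 0 ≤ γ j)
    (c : ι → R) (n : ℕ) (e : ℤ) :
    ((∑ j ∈ univ.erase i₀, AddMonoidAlgebra.single (m j - m i₀, k j - k i₀) (c j)) ^ n).coeff
        ((0 : κ → ℤ), e) =
      if (n : ℤ) = -γ i₀ * e then
        Nat.multinomial (univ.erase i₀) (fun j => (γ j * e).toNat) *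
          ∏ j ∈ univ.erase i₀, c j ^ (γ j * e).toNat
      else 0 := by
  classical
  rw [AddMonoidAlgebra.coeff_sum_single_pow, filter_sum_smul_sub_eq hrel hk hneg hpos]
  split_ifs <;> simp

theorem prod_erase_div_pow_toNat_mul {K : Type*} [Field K] [CharZero K] (hsum : ∑ j, γ j = 0)
    (hneg : γ i₀ < 0) (hpos : ∀ j, j ≠ i₀ → 0 ≤ γ j) (h : ℕ) :
    ∏ j ∈ univ.erase i₀, ((γ j : K) / γ i₀) ^ (γ j * h).toNat = (∏ j, (γ j : K) ^ γ j) ^ h := by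
  calc ∏ j ∈ univ.erase i₀, ((γ j : K) / γ i₀) ^ (γ j * h).toNat
      = ∏ j ∈ univ.erase i₀, (((γ j : K) / γ i₀) ^ γ j) ^ h := by
        refine prod_congr rfl fun j hj => ?_
        have hγh : 0 ≤ γ j * h := mul_nonneg (hpos j (ne_of_mem_erase hj)) h.cast_nonneg
        rw [← zpow_natCast, Int.toNat_of_nonneg hγh, zpow_mul, zpow_natCast]
    _ = (∏ j, (γ j : K) ^ γ j) ^ h := by
        rw [prod_pow, prod_erase_div_zpow i₀ (by exact_mod_cast hneg.ne) hsum]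

end ToricModel

theorem constant_term_of_g_pow_general (d : ℕ) (γ : Fin (d + 2) → ℤ)
    (hneg : γ 0 < 0) (hpos : ∀ j, j ≠ 0 → 0 < γ j)
    (m : Fin (d + 2) → Fin d → ℤ) (k : Fin (d + 2) → ℤ)
    (hrel : ∀ r : Fin (d + 2) → ℤ,
      ((∑ j, r j = 0) ∧ (∀ i, ∑ j, r j * m j i = 0)) ↔ ∃ c : ℤ, r = c • γ)
    (hk : ∑ j, γ j * k j = 1)
    (g : AddMonoidAlgebra ℂ ((Fin d → ℤ) × ℤ))
    (hg : g = ∑ j ∈ Finset.univ.erase 0,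
      AddMonoidAlgebra.single (m j - m 0, k j - k 0) ((γ j : ℂ) / (γ 0 : ℂ)))
    (n : ℕ) :
    ((¬ ∃ h : ℕ, (n : ℤ) = -γ 0 * h) →
      ∀ e : ℤ, (g ^ n).coeff ((0 : Fin d → ℤ), e) = 0) ∧
    (∀ h : ℕ, (n : ℤ) = -γ 0 * h →
      ∀ e : ℤ, (g ^ n).coeff ((0 : Fin d → ℤ), e) =
        if e = (h : ℤ) then
          (Nat.multinomial (Finset.univ.erase 0) (fun j => (γ j * h).toNat) : ℂ) *
            (∏ j, (γ j : ℂ) ^ γ j) ^ h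
        else 0) := by
  have hpos' : ∀ j, j ≠ 0 → 0 ≤ γ j := fun j hj => (hpos j hj).le
  have hsum : ∑ j, γ j = 0 := ((hrel γ).2 ⟨1, (one_smul ℤ γ).symm⟩).1
  have hcoeff (e : ℤ) := hg ▸ coeff_sum_single_sub_pow hrel hk hneg hpos'
    (fun j => (γ j : ℂ) / γ 0) n e
  refine ⟨fun hn e => ?_, fun h hn e => ?_⟩
  · rw [hcoeff, if_neg]
    intro he
    exact hn ⟨e.toNat, by rwa [Int.toNat_of_nonneg (by nlinarith)]⟩
  · have hiff : (n : ℤ) = -γ 0 * e ↔ e = h := by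
      rw [hn]
      exact ⟨fun he => (mul_left_cancel₀ (by omega) he).symm, fun he => by rw [he]⟩
    rw [hcoeff, if_congr hiff rfl rfl]
    split_ifs with he
    · subst he
      rw [prod_erase_div_pow_toNat_mul hsum hneg hpos']
    · rfl

/-- **Constant term of powers of `g`.**
Let `γ ∈ ℤ^l` (`l = d + 2`) be a prime gamma vector with unique negative entry
`γ_0`, toric model data `m_j ∈ ℤ^d`, `k_j ∈ ℤ` with `∑ γ_j (1, m_j) = 0`
generating all integral relations and `∑ γ_j k_j = 1`.  Let
`g = (γ_0 t^{k_0} x^{m_0})⁻¹ ∑_{j ≠ 0} γ_j t^{k_j} x^{m_j}`, a Laurent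
polynomial in `x` and `t` (an element of the group algebra of `ℤ^d × ℤ`).
Then the coefficient of `x^0 t^e` in `g^n` vanishes unless `n = −γ_0 h` for
some `h ≥ 0` and `e = h`, in which case it is the multinomial coefficient
`(−γ_0 h; γ_1 h, …, γ_{l-1} h)` times `Γ^h`, `Γ = ∏ γ_j^{γ_j}`. -/
theorem constant_term_of_g_pow (d : ℕ) (γ : Fin (d + 2) → ℤ)
    (hγ0 : ∀ j, γ j ≠ 0) (hsum : ∑ j, γ j = 0)
    (hgcd : Finset.univ.gcd γ = 1)
    (hneg : γ 0 < 0) (hpos : ∀ j, j ≠ 0 → 0 < γ j)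
    (m : Fin (d + 2) → Fin d → ℤ) (k : Fin (d + 2) → ℤ)
    (hrel : ∀ r : Fin (d + 2) → ℤ,
      ((∑ j, r j = 0) ∧ (∀ i, ∑ j, r j * m j i = 0)) ↔ ∃ c : ℤ, r = c • γ)
    (hk : ∑ j, γ j * k j = 1)
    (g : AddMonoidAlgebra ℂ ((Fin d → ℤ) × ℤ))
    (hg : g = ∑ j ∈ Finset.univ.erase 0,
      AddMonoidAlgebra.single (m j - m 0, k j - k 0) ((γ j : ℂ) / (γ 0 : ℂ)))
    (n : ℕ) :
    ((¬ ∃ h : ℕ, (n : ℤ) = -γ 0 * h) →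
      ∀ e : ℤ, (g ^ n).coeff ((0 : Fin d → ℤ), e) = 0) ∧
    (∀ h : ℕ, (n : ℤ) = -γ 0 * h →
      ∀ e : ℤ, (g ^ n).coeff ((0 : Fin d → ℤ), e) =
        if e = (h : ℤ) then
          (Nat.multinomial (Finset.univ.erase 0) (fun j => (γ j * h).toNat) : ℂ) *
            (∏ j, (γ j : ℂ) ^ γ j) ^ h
        else 0) :=
  constant_term_of_g_pow_general d γ hneg hpos m k hrel hk g hg n
end

section
/- Let γ_1, …, γ_l be nonzero integers summing to zero with gcd 1, exactly one of which (say γ_1) is negative. Then the power series ∑_{h=0}^∞ (−1)^{γ_1 h} binom(−γ_1 h; γ_2 h, …, γ_l h) (Γ t)^h, with Γ = ∏_j γ_j^{γ_j}, equals the generalized hypergeometric series F(α; β | t) = ∑_{k≥0} ∏_i (α_i)_k / ∏_i (β_i)_k · t^k, where α, β ∈ (0,1]^n are the multisets of rationals (with α_i − β_j ∉ ℤ) determined by (x^{−γ_1}−1)/∏_{j≥2}(x^{γ_j}−1) = ∏_i(x − e^{2πiα_i})/∏_i(x − e^{2πiβ_i}). -/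
/-!
Write `a₀ = -γ₀` and `aⱼ = γⱼ` for `j ≠ 0`. Since `X ^ a - 1 = ∏_{m=1}^{a} (X - e^{2πi m/a})` and
`θ ↦ e^{2πiθ}` is injective on `(0, 1]`, the polynomial identity determining `α` and `β` is the
multiset identity `{m/a₀} + β = ∑ⱼ {m/aⱼ} + α` of exponents in `(0, 1]`. Gauss's multiplication
formula `(a h)! = a ^ (a h) ∏_{m=1}^{a} (m/a)_h` turns the multinomial coefficient
`(a₀ h)! / ∏ⱼ (aⱼ h)!` into a quotient of Pochhammer symbols at these fractions, which the multiset
identity reduces to `∏ (αᵢ)_h / ∏ (βᵢ)_h`; the leftover powers `a ^ (a h)` combine with the sign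
into `Γ ^ h`.
-/

open Finset Polynomial Complex

open scoped Nat

theorem Multiset.count_map_eq_count_of_injOn {α β : Type*} [DecidableEq α] [DecidableEq β]
    {D : Set α} {f : α → β} (hf : D.InjOn f) {s : Multiset α} (hs : ∀ y ∈ s, y ∈ D)
    {x : α} (hx : x ∈ D) : (s.map f).count (f x) = s.count x := by
  rw [count_map, count_eq_card_filter_eq]
  congr 1
  exact filter_congr fun y hy => ⟨fun h => hf hx (hs y hy) h, congrArg f⟩

theorem Multiset.eq_of_map_eq_of_injOn {α β : Type*} {D : Set α} {f : α → β} (hf : D.InjOn f)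
    {s t : Multiset α} (hs : ∀ y ∈ s, y ∈ D) (ht : ∀ y ∈ t, y ∈ D) (h : s.map f = t.map f) :
    s = t := by
  classical
  ext x
  by_cases hx : x ∈ D
  · rw [← count_map_eq_count_of_injOn hf hs hx, h, count_map_eq_count_of_injOn hf ht hx]
  · rw [count_eq_zero.mpr fun h => hx (hs x h), count_eq_zero.mpr fun h => hx (ht x h)]

theorem Multiset.prod_map_finset_sum {ι α M : Type*} [CommMonoid M] (s : Finset ι)
    (S : ι → Multiset α) (g : α → M) :
    ((∑ j ∈ s, S j).map g).prod = ∏ j ∈ s, ((S j).map g).prod := by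
  classical
  induction s using Finset.induction_on with
  | empty => simp
  | insert j s hj ih => rw [sum_insert hj, prod_insert hj, map_add, prod_add, ih]

noncomputable def expTwoPiI (θ : ℚ) : ℂ := exp (2 * (Real.pi : ℂ) * I * (θ : ℂ))

theorem expTwoPiI_injOn_Ioc : (Set.Ioc (0 : ℚ) 1).InjOn expTwoPiI := by
  intro θ₁ h₁ θ₂ h₂ h
  obtain ⟨k, hk⟩ := exp_eq_exp_iff_exists_int.mp h
  have hk' : θ₁ = θ₂ + k := by
    have h2πI : 2 * (Real.pi : ℂ) * I ≠ 0 := by simp [Real.pi_ne_zero, I_ne_zero]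
    have : (θ₁ : ℂ) = θ₂ + k := mul_left_cancel₀ h2πI (by linear_combination hk)
    exact_mod_cast this
  have hk0 : k = 0 := by
    have hlt : -1 < k := by exact_mod_cast (by linarith [h₁.1, h₂.2] : (-1 : ℚ) < k)
    have hgt : k < 1 := by exact_mod_cast (by linarith [h₁.2, h₂.1] : (k : ℚ) < 1)
    omega
  simpa [hk0] using hk'

noncomputable def unitFractions (a : ℕ) : Multiset ℚ :=
  (Multiset.range a).map fun m : ℕ => ((m : ℚ) + 1) / a

theorem prod_map_unitFractions {M : Type*} [CommMonoid M] (a : ℕ) (f : ℚ → M) :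
    ((unitFractions a).map f).prod = ∏ m ∈ range a, f (((m : ℚ) + 1) / a) := by
  rw [unitFractions, Multiset.map_map]
  rfl

theorem mem_Ioc_of_mem_unitFractions {a : ℕ} {θ : ℚ} (hθ : θ ∈ unitFractions a) :
    θ ∈ Set.Ioc (0 : ℚ) 1 := by
  obtain ⟨m, hm, rfl⟩ := Multiset.mem_map.mp hθ
  have hm : (m : ℚ) + 1 ≤ a := by exact_mod_cast Multiset.mem_range.mp hm
  exact ⟨div_pos (by positivity) (by linarith), div_le_one_of_le₀ hm (Nat.cast_nonneg a)⟩

theorem X_pow_sub_one_eq_prod_unitFractions {a : ℕ} (ha : 0 < a) :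
    (X ^ a - 1 : ℂ[X]) = ((unitFractions a).map fun θ => X - C (expTwoPiI θ)).prod := by
  set ζ := exp (2 * Real.pi * I / a)
  have hζ : IsPrimitiveRoot ζ a := isPrimitiveRoot_exp a ha.ne'
  rw [← C_1, X_pow_sub_C_eq_prod hζ ha hζ.pow_eq_one, prod_map_unitFractions]
  refine prod_congr rfl fun m _ => ?_
  rw [← pow_succ, ← Complex.exp_nat_mul, expTwoPiI]
  congr 2
  push_cast
  field_simp

theorem eq_of_prod_X_sub_C_expTwoPiI_eq {S T : Multiset ℚ} (hS : ∀ θ ∈ S, θ ∈ Set.Ioc (0 : ℚ) 1)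
    (hT : ∀ θ ∈ T, θ ∈ Set.Ioc (0 : ℚ) 1)
    (h : (S.map fun θ => X - C (expTwoPiI θ)).prod = (T.map fun θ => X - C (expTwoPiI θ)).prod) :
    S = T := by
  refine Multiset.eq_of_map_eq_of_injOn expTwoPiI_injOn_Ioc hS hT ?_
  rw [← roots_multiset_prod_X_sub_C (S.map expTwoPiI),
    ← roots_multiset_prod_X_sub_C (T.map expTwoPiI), Multiset.map_map, Multiset.map_map]
  exact congrArg roots h

theorem unitFractions_add_eq_of_prod_eq {ι : Type*} (s : Finset ι) (a : ι → ℕ)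
    (ha : ∀ j ∈ s, 0 < a j) {b : ℕ} (hb : 0 < b) {n : ℕ} {α β : Fin n → ℚ}
    (hα : ∀ i, α i ∈ Set.Ioc (0 : ℚ) 1) (hβ : ∀ i, β i ∈ Set.Ioc (0 : ℚ) 1)
    (h : (X ^ b - 1 : ℂ[X]) * ∏ i, (X - C (expTwoPiI (β i))) =
      (∏ j ∈ s, (X ^ a j - 1)) * ∏ i, (X - C (expTwoPiI (α i)))) :
    unitFractions b + univ.val.map β = ∑ j ∈ s, unitFractions (a j) + univ.val.map α := by
  refine eq_of_prod_X_sub_C_expTwoPiI_eq ?_ ?_ ?_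
  · simp only [Multiset.mem_add, Multiset.mem_map]
    rintro θ (hθ | ⟨i, -, rfl⟩)
    exacts [mem_Ioc_of_mem_unitFractions hθ, hβ i]
  · simp only [Multiset.mem_add, Multiset.mem_sum, Multiset.mem_map]
    rintro θ (⟨j, -, hθ⟩ | ⟨i, -, rfl⟩)
    exacts [mem_Ioc_of_mem_unitFractions hθ, hα i]
  · simp only [Multiset.map_add, Multiset.prod_add, Multiset.prod_map_finset_sum, Multiset.map_map,
      Function.comp_def, prod_map_val, ← X_pow_sub_one_eq_prod_unitFractions hb]
    rwa [prod_congr rfl fun j hj => (X_pow_sub_one_eq_prod_unitFractions (ha j hj)).symm]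

theorem Nat.factorial_add_eq_mul_prod_range (n a : ℕ) :
    (n + a)! = n ! * ∏ m ∈ range a, (n + m + 1) := by
  rw [← Nat.factorial_mul_ascFactorial, Nat.ascFactorial_eq_prod_range]
  simp only [add_right_comm]

theorem factorial_mul_eq_pow_mul_prod_ascPochhammer {K : Type*} [Field K] [CharZero K]
    (a h : ℕ) :
    ((a * h)! : K) = (a : K) ^ (a * h) *
      ((unitFractions a).map fun θ : ℚ => (ascPochhammer K h).eval (θ : K)).prod := by
  rw [prod_map_unitFractions]
  induction h with
  | zero => simp
  | succ h ih =>
    have hblock : ∏ m ∈ range a, ((a * h + m + 1 : ℕ) : K) =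
        (a : K) ^ a * ∏ m ∈ range a, ((((m + 1) / a : ℚ) : K) + h) := by
      rw [← card_range a, ← prod_const, card_range, ← prod_mul_distrib]
      refine prod_congr rfl fun m hm => ?_
      have ha : (a : K) ≠ 0 := Nat.cast_ne_zero.mpr (by have := mem_range.mp hm; omega)
      push_cast
      field_simp
      ring
    rw [mul_add_one, Nat.factorial_add_eq_mul_prod_range, Nat.cast_mul, ih, Nat.cast_prod, hblock]
    simp only [ascPochhammer_succ_eval, prod_mul_distrib]
    ring

theorem ascPochhammer_eval_ratCast_ne_zero {K : Type*} [Field K] [CharZero K] (h : ℕ) {θ : ℚ}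
    (hθ : 0 < θ) : (ascPochhammer K h).eval (θ : K) ≠ 0 := by
  rw [← ascPochhammer_map (Rat.castHom K), eval_map, ← eq_ratCast (Rat.castHom K), eval₂_at_apply,
    _root_.map_ne_zero]
  exact (ascPochhammer_pos h θ hθ).ne'

theorem multinomial_mul_pow_div_pow_eq {K ι : Type*} [Field K] [CharZero K] (s : Finset ι)
    (a : ι → ℕ) {b : ℕ} (hb : ∑ j ∈ s, a j = b) {n : ℕ} (α β : Fin n → ℚ) (hβ : ∀ i, 0 < β i)
    (hroots : unitFractions b + univ.val.map β = ∑ j ∈ s, unitFractions (a j) + univ.val.map α)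
    (h : ℕ) :
    (Nat.multinomial s (fun j => a j * h) : K) * (∏ j ∈ s, (a j : K) ^ a j) ^ h / ((b : K) ^ b) ^ h =
      (∏ i, (ascPochhammer K h).eval (α i : K)) / ∏ i, (ascPochhammer K h).eval (β i : K) := by
  set P : ℚ → K := fun θ => (ascPochhammer K h).eval (θ : K)
  set Q : ℕ → K := fun c => ((unitFractions c).map P).prod
  have hPβ : ∏ i, P (β i) ≠ 0 :=
    prod_ne_zero_iff.mpr fun i _ => ascPochhammer_eval_ratCast_ne_zero h (hβ i)
  have hQ : ∏ j ∈ s, Q (a j) ≠ 0 := by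
    refine prod_ne_zero_iff.mpr fun j _ => Multiset.prod_ne_zero fun h0 => ?_
    obtain ⟨θ, hθ, hθ0⟩ := Multiset.mem_map.mp h0
    exact ascPochhammer_eval_ratCast_ne_zero h (mem_Ioc_of_mem_unitFractions hθ).1 hθ0
  have hB : ((b : K) ^ b) ^ h ≠ 0 := pow_ne_zero _ (by exact_mod_cast Nat.pow_self_pos.ne')
  have hspec : (∏ j ∈ s, ((a j * h)! : K)) * Nat.multinomial s (fun j => a j * h) = (b * h)! := by
    rw [← hb, sum_mul]
    exact_mod_cast Nat.multinomial_spec s _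
  have hgauss_s :
      ∏ j ∈ s, ((a j * h)! : K) = (∏ j ∈ s, (a j : K) ^ a j) ^ h * ∏ j ∈ s, Q (a j) := by
    simp only [factorial_mul_eq_pow_mul_prod_ascPochhammer, prod_mul_distrib, ← prod_pow, pow_mul]
    rfl
  have hgauss_b : ((b * h)! : K) = ((b : K) ^ b) ^ h * Q b := by
    rw [factorial_mul_eq_pow_mul_prod_ascPochhammer, pow_mul]
  have hpoch : Q b * ∏ i, P (β i) = (∏ j ∈ s, Q (a j)) * ∏ i, P (α i) := by
    simpa only [Multiset.map_add, Multiset.prod_add, Multiset.prod_map_finset_sum,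
      Multiset.map_map, Function.comp_def, prod_map_val] using
      congrArg (fun S => (S.map P).prod) hroots
  rw [div_eq_div_iff hB hPβ]
  apply mul_left_cancel₀ hQ
  linear_combination (∏ i, P (β i)) * hspec + (∏ i, P (β i)) * hgauss_b
    - (Nat.multinomial s (fun j => a j * h) * ∏ i, P (β i)) * hgauss_s
    + ((b : K) ^ b) ^ h * hpoch

theorem neg_one_zpow_mul_prod_zpow_self {K ι : Type*} [Field K] [Fintype ι] [DecidableEq ι]
    (γ : ι → ℤ) (i₀ : ι) (hneg : γ i₀ < 0) (hpos : ∀ j, j ≠ i₀ → 0 < γ j) :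
    (-1 : K) ^ γ i₀ * ∏ j, (γ j : K) ^ γ j =
      (∏ j ∈ univ.erase i₀, ((γ j).toNat : K) ^ (γ j).toNat) /
        ((-γ i₀).toNat : K) ^ (-γ i₀).toNat := by
  have h₀ : (-1 : K) ^ γ i₀ * (γ i₀ : K) ^ γ i₀ = (((-γ i₀).toNat : K) ^ (-γ i₀).toNat)⁻¹ := by
    obtain ⟨c, hc⟩ : ∃ c : ℕ, γ i₀ = -c := ⟨(-γ i₀).toNat, by omega⟩
    rw [← mul_zpow, hc]
    push_cast
    rw [neg_one_mul, neg_neg, zpow_neg, zpow_natCast, neg_neg, Int.toNat_natCast]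
  have hE : ∀ j ∈ univ.erase i₀, (γ j : K) ^ γ j = ((γ j).toNat : K) ^ (γ j).toNat := by
    intro j hj
    obtain ⟨c, hc⟩ : ∃ c : ℕ, γ j = c :=
      ⟨(γ j).toNat, by have := hpos j (ne_of_mem_erase hj); omega⟩
    rw [hc, Int.toNat_natCast, zpow_natCast, Int.cast_natCast]
  rw [← mul_prod_erase univ _ (mem_univ i₀), ← mul_assoc, h₀, prod_congr rfl hE, inv_mul_eq_div]

theorem multinomial_series_eq_hypergeometric_general (d : ℕ) (γ : Fin (d + 2) → ℤ)
    (hsum : ∑ j, γ j = 0)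
    (hneg : γ 0 < 0) (hpos : ∀ j, j ≠ 0 → 0 < γ j)
    (n : ℕ) (α β : Fin n → ℚ)
    (hα : ∀ i, 0 < α i ∧ α i ≤ 1) (hβ : ∀ i, 0 < β i ∧ β i ≤ 1)
    (hfrac : (X ^ (-γ 0).toNat - 1) *
        ∏ i, (X - C (Complex.exp (2 * (Real.pi : ℂ) * Complex.I * (β i : ℂ)))) =
      (∏ j ∈ Finset.univ.erase 0, (X ^ (γ j).toNat - 1)) *
        ∏ i, (X - C (Complex.exp (2 * (Real.pi : ℂ) * Complex.I * (α i : ℂ))))) :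
    ∀ h : ℕ,
      ((-1 : ℂ) ^ (γ 0 * h)) *
          (Nat.multinomial (Finset.univ.erase 0) (fun j => (γ j * h).toNat) : ℂ) *
          (∏ j, (γ j : ℂ) ^ γ j) ^ h =
        (∏ i, (ascPochhammer ℂ h).eval (α i : ℂ)) /
          (∏ i, (ascPochhammer ℂ h).eval (β i : ℂ)) := by
  intro h
  have hγ : ∀ j ∈ univ.erase 0, γ j = (γ j).toNat := fun j hj =>
    (Int.toNat_of_nonneg (hpos j (ne_of_mem_erase hj)).le).symm
  have hb : ∑ j ∈ univ.erase 0, (γ j).toNat = (-γ 0).toNat := by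
    have := add_sum_erase univ γ (mem_univ 0)
    rw [sum_congr rfl hγ, ← Nat.cast_sum] at this
    omega
  -- `hfrac` is the hypothesis of this lemma with `expTwoPiI` unfolded.
  have hroots := unitFractions_add_eq_of_prod_eq _ (fun j => (γ j).toNat)
    (fun j hj => by have := hpos j (ne_of_mem_erase hj); omega) (by omega) hα hβ hfrac
  have hmult : Nat.multinomial (univ.erase 0) (fun j => (γ j * h).toNat) =
      Nat.multinomial (univ.erase 0) (fun j => (γ j).toNat * h) :=
    Nat.multinomial_congr fun j hj => by rw [hγ j hj]; norm_cast
  rw [← multinomial_mul_pow_div_pow_eq _ _ hb α β (fun i => (hβ i).1) hroots h, hmult, zpow_mul,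
    zpow_natCast, mul_right_comm, ← mul_pow, neg_one_zpow_mul_prod_zpow_self γ 0 hneg hpos,
    div_pow, mul_comm, mul_div_assoc]

/-- **The multinomial series is the hypergeometric series.**
Let `γ_0, …, γ_{l-1}` (`l = d+2`) be nonzero integers summing to zero with
gcd 1, with `γ_0` the unique negative entry.  Let `α, β ∈ ((0,1] ∩ ℚ)^n` with
`α_i − β_j ∉ ℤ` be determined by
`(x^{−γ_0}−1)/∏_{j≥1}(x^{γ_j}−1) = ∏(x−e^{2πiα_i})/∏(x−e^{2πiβ_i})`.
Then the series `∑_h (−1)^{γ_0 h}·binom(−γ_0 h; γ_1 h, …)·(Γ t)^h` equals the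
hypergeometric series `F(α; β | t)` coefficientwise (coefficient of `t^h`). -/
theorem multinomial_series_eq_hypergeometric (d : ℕ) (γ : Fin (d + 2) → ℤ)
    (hγ0 : ∀ j, γ j ≠ 0) (hsum : ∑ j, γ j = 0)
    (hgcd : Finset.univ.gcd γ = 1)
    (hneg : γ 0 < 0) (hpos : ∀ j, j ≠ 0 → 0 < γ j)
    (n : ℕ) (α β : Fin n → ℚ)
    (hα : ∀ i, 0 < α i ∧ α i ≤ 1) (hβ : ∀ i, 0 < β i ∧ β i ≤ 1)
    (hαβ : ∀ i j, ¬ ∃ z : ℤ, α i - β j = (z : ℚ))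
    (hfrac : (X ^ (-γ 0).toNat - 1) *
        ∏ i, (X - C (Complex.exp (2 * (Real.pi : ℂ) * Complex.I * (β i : ℂ)))) =
      (∏ j ∈ Finset.univ.erase 0, (X ^ (γ j).toNat - 1)) *
        ∏ i, (X - C (Complex.exp (2 * (Real.pi : ℂ) * Complex.I * (α i : ℂ))))) :
    ∀ h : ℕ,
      ((-1 : ℂ) ^ (γ 0 * h)) *
          (Nat.multinomial (Finset.univ.erase 0) (fun j => (γ j * h).toNat) : ℂ) *
          (∏ j, (γ j : ℂ) ^ γ j) ^ h =
        (∏ i, (ascPochhammer ℂ h).eval (α i : ℂ)) /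
          (∏ i, (ascPochhammer ℂ h).eval (β i : ℂ)) :=
  multinomial_series_eq_hypergeometric_general d γ hsum hneg hpos n α β hα hβ hfrac
end
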